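/- arXiv:2403.05134 — 13 statements merged into one kernel-verified Lean document; each statement's English description precedes it below -/
import Mathlib

section
/- For every real α > 0 and every real x > 0, the lower incomplete gamma function satisfies γ(1 + 1/α, x) ≤ Γ(1 + 1/α) · (1 − e^{−x}). -/
/-!
Split `Γ(a) = γ(a, x) + ∫ₓ^∞ t^(a-1) e^(-t) dt`. Substituting `t = s + x` in the tail and using
that `t ↦ t^(a-1)` is nondecreasing for `a ≥ 1` gives `∫ₓ^∞ t^(a-1) e^(-t) dt ≥ e^(-x) Γ(a)`,
hence `γ(a, x) ≤ Γ(a) (1 - e^(-x))`; here `a = 1 + 1/α ≥ 1`.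
-/

open Real MeasureTheory Set

theorem integrableOn_Ioi_comp_add_right_iff {E : Type*} [NormedAddCommGroup E] {f : ℝ → E}
    (a c : ℝ) :
    IntegrableOn (fun t => f (t + c)) (Ioi a) ↔ IntegrableOn f (Ioi (a + c)) := by
  have h := (measurePreserving_add_right volume c).integrableOn_comp_preimage
    (measurableEmbedding_addRight c) (f := f) (s := Ioi (a + c))
  rwa [preimage_add_const_Ioi, add_sub_cancel_right] at h

theorem setIntegral_Ioi_comp_add_right {E : Type*} [NormedAddCommGroup E] [NormedSpace ℝ E]
    (f : ℝ → E) (a c : ℝ) :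
    ∫ t in Ioi a, f (t + c) = ∫ t in Ioi (a + c), f t := by
  have h := (measurePreserving_add_right volume c).setIntegral_preimage_emb
    (measurableEmbedding_addRight c) f (Ioi (a + c))
  rwa [preimage_add_const_Ioi, add_sub_cancel_right] at h

namespace Real

theorem integrableOn_rpow_mul_exp_neg {a : ℝ} (ha : 0 < a) :
    IntegrableOn (fun t => t ^ (a - 1) * exp (-t)) (Ioi 0) := by
  simpa only [mul_comm] using GammaIntegral_convergent ha

theorem Gamma_eq_integral_rpow_mul_exp_neg {a : ℝ} (ha : 0 < a) :
    Gamma a = ∫ t in Ioi 0, t ^ (a - 1) * exp (-t) := by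
  simp only [Gamma_eq_integral ha, mul_comm]

theorem exp_neg_mul_Gamma_le_integral_Ioi {a x : ℝ} (ha : 1 ≤ a) (hx : 0 ≤ x) :
    exp (-x) * Gamma a ≤ ∫ t in Ioi x, t ^ (a - 1) * exp (-t) := by
  have ha0 : 0 < a := by linarith
  have hint := integrableOn_rpow_mul_exp_neg ha0
  have hshift_int : IntegrableOn (fun s => (s + x) ^ (a - 1) * exp (-(s + x))) (Ioi 0) :=
    (integrableOn_Ioi_comp_add_right_iff 0 x).2 (by simpa using hint.mono_set (Ioi_subset_Ioi hx))
  rw [← zero_add x, ← setIntegral_Ioi_comp_add_right, zero_add,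
    Gamma_eq_integral_rpow_mul_exp_neg ha0, ← integral_const_mul]
  refine setIntegral_mono_on (hint.const_mul _) hshift_int measurableSet_Ioi fun s hs => ?_
  have hmono : s ^ (a - 1) ≤ (s + x) ^ (a - 1) :=
    rpow_le_rpow (le_of_lt hs) (by linarith [mem_Ioi.1 hs]) (by linarith)
  calc exp (-x) * (s ^ (a - 1) * exp (-s))
      ≤ exp (-x) * ((s + x) ^ (a - 1) * exp (-s)) := by gcongr
    _ = (s + x) ^ (a - 1) * exp (-(s + x)) := by rw [neg_add, exp_add]; ring

theorem integral_rpow_mul_exp_neg_le_Gamma_mul {a x : ℝ} (ha : 1 ≤ a) (hx : 0 ≤ x) :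
    ∫ t in (0 : ℝ)..x, t ^ (a - 1) * exp (-t) ≤ Gamma a * (1 - exp (-x)) := by
  have ha0 : 0 < a := by linarith
  rw [← intervalIntegral.integral_Ioi_sub_Ioi (integrableOn_rpow_mul_exp_neg ha0) hx,
    ← Gamma_eq_integral_rpow_mul_exp_neg ha0]
  linarith [exp_neg_mul_Gamma_le_integral_Ioi ha hx]

end Real

/-- For `α > 0` and `x > 0`, `γ(1 + 1/α, x) ≤ Γ(1 + 1/α) · (1 - e^(-x))`,
where `γ` is the lower incomplete gamma function. -/
theorem stmt_1 (α x : ℝ) (hα : 0 < α) (hx : 0 < x) :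
    (∫ t in (0:ℝ)..x, t ^ (1 + 1/α - 1) * Real.exp (-t)) ≤
      Real.Gamma (1 + 1/α) * (1 - Real.exp (-x)) :=
  Real.integral_rpow_mul_exp_neg_le_Gamma_mul (le_add_of_nonneg_right (by positivity)) hx.le
end

section
/- For every real α > 1 and every positive integer i, the function x ↦ B(x; 1 + 1/α, i) / B(x; 1, i) is monotonically increasing on the interval (0, 1]. -/
/-! Write the ratio as the `g`-weighted average of `f(t) = t^(1/α)` over `[0, x]`, with
`g(t) = (1 - t)^(i-1) ≥ 0`. Since `f` is increasing, its average over `[0, x]` is at most `f x`,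
which is at most its average over `[x, y]`; and the average over `[0, y]` is a mediant of the two. -/

open Real MeasureTheory Set intervalIntegral

lemma div_le_add_div_add {n d m e c : ℝ} (hd : 0 < d) (he : 0 ≤ e)
    (hn : n ≤ c * d) (hm : c * e ≤ m) : n / d ≤ (n + m) / (d + e) := by
  rw [div_le_div_iff₀ hd (by linarith)]
  nlinarith [mul_le_mul_of_nonneg_right hn he]

section WeightedAverage

variable {f g : ℝ → ℝ} {a b : ℝ}

lemma integral_mul_le_mul_integral_of_monotoneOn (hab : a ≤ b) (hf : MonotoneOn f (Icc a b))
    (hg : ∀ t ∈ Icc a b, 0 ≤ g t) (hfg : IntervalIntegrable (fun t => f t * g t) volume a b)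
    (hgi : IntervalIntegrable g volume a b) :
    ∫ t in a..b, f t * g t ≤ f b * ∫ t in a..b, g t := by
  rw [← intervalIntegral.integral_const_mul]
  refine integral_mono_on hab hfg (hgi.const_mul _) fun t ht => ?_
  exact mul_le_mul_of_nonneg_right (hf ht (right_mem_Icc.2 hab) ht.2) (hg t ht)

lemma mul_integral_le_integral_mul_of_monotoneOn (hab : a ≤ b) (hf : MonotoneOn f (Icc a b))
    (hg : ∀ t ∈ Icc a b, 0 ≤ g t) (hfg : IntervalIntegrable (fun t => f t * g t) volume a b)
    (hgi : IntervalIntegrable g volume a b) :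
    f a * ∫ t in a..b, g t ≤ ∫ t in a..b, f t * g t := by
  rw [← intervalIntegral.integral_const_mul]
  refine integral_mono_on hab (hgi.const_mul _) hfg fun t ht => ?_
  exact mul_le_mul_of_nonneg_right (hf (left_mem_Icc.2 hab) ht ht.1) (hg t ht)

theorem monotoneOn_integral_mul_div_integral (hf : MonotoneOn f (Icc a b))
    (hg : ∀ t ∈ Icc a b, 0 ≤ g t) (hfg : IntervalIntegrable (fun t => f t * g t) volume a b)
    (hgi : IntervalIntegrable g volume a b) (hpos : ∀ x ∈ Ioc a b, 0 < ∫ t in a..x, g t) :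
    MonotoneOn (fun x => (∫ t in a..x, f t * g t) / ∫ t in a..x, g t) (Ioc a b) := by
  intro x ⟨hax, hxb⟩ y ⟨_, hyb⟩ hxy
  have hsub : ∀ {c d}, a ≤ c → c ≤ d → d ≤ b → uIcc c d ⊆ uIcc a b := fun hc hcd hd => by
    rw [uIcc_of_le hcd, uIcc_of_le (hc.trans (hcd.trans hd))]; exact Icc_subset_Icc hc hd
  have hfg' {c d} (hc : a ≤ c) (hcd : c ≤ d) (hd : d ≤ b) :
      IntervalIntegrable (fun t => f t * g t) volume c d := hfg.mono_set (hsub hc hcd hd)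
  have hgi' {c d} (hc : a ≤ c) (hcd : c ≤ d) (hd : d ≤ b) : IntervalIntegrable g volume c d :=
    hgi.mono_set (hsub hc hcd hd)
  have hg' {c d} (hc : a ≤ c) (hd : d ≤ b) : ∀ t ∈ Icc c d, 0 ≤ g t :=
    fun t ht => hg t (Icc_subset_Icc hc hd ht)
  simp only
  rw [← integral_add_adjacent_intervals (hfg' le_rfl hax.le hxb) (hfg' hax.le hxy hyb),
    ← integral_add_adjacent_intervals (hgi' le_rfl hax.le hxb) (hgi' hax.le hxy hyb)]
  refine div_le_add_div_add (c := f x) (hpos x ⟨hax, hxb⟩)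
    (integral_nonneg hxy (hg' hax.le hyb)) ?_ ?_
  · exact integral_mul_le_mul_integral_of_monotoneOn hax.le (hf.mono (Icc_subset_Icc le_rfl hxb))
      (hg' le_rfl hxb) (hfg' le_rfl hax.le hxb) (hgi' le_rfl hax.le hxb)
  · exact mul_integral_le_integral_mul_of_monotoneOn hxy (hf.mono (Icc_subset_Icc hax.le hyb))
      (hg' hax.le hyb) (hfg' hax.le hxy hyb) (hgi' hax.le hxy hyb)

end WeightedAverage

theorem stmt_3_general (α : ℝ) (hα : 1 < α) (i : ℕ) :
    MonotoneOn (fun x : ℝ =>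
      (∫ t in (0:ℝ)..x, t ^ (1/α) * (1 - t) ^ (i - 1)) /
      (∫ t in (0:ℝ)..x, (1 - t) ^ (i - 1)))
      (Set.Ioc (0:ℝ) 1) := by
  have hexp : 0 ≤ 1 / α := by positivity
  have hg : Continuous fun t : ℝ => (1 - t) ^ (i - 1) := by fun_prop
  have hf : Continuous fun t : ℝ => t ^ (1 / α) :=
    continuous_iff_continuousAt.2 fun x => continuousAt_rpow_const x _ (Or.inr hexp)
  refine monotoneOn_integral_mul_div_integral
    (fun s hs t _ hst => rpow_le_rpow hs.1 hst hexp)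
    (fun t ht => pow_nonneg (by linarith [ht.2]) _)
    ((hf.mul hg).intervalIntegrable 0 1) (hg.intervalIntegrable 0 1) fun x hx => ?_
  refine intervalIntegral_pos_of_pos_on (hg.intervalIntegrable 0 x) (fun t ht => ?_) hx.1
  exact pow_pos (by linarith [ht.2, hx.2]) _

/-- For `α > 1` and a positive integer `i`, the map
`x ↦ B(x; 1 + 1/α, i) / B(x; 1, i)` is monotonically increasing on `(0, 1]`,
where `B(x; a, b) = ∫₀ˣ t^(a-1) (1-t)^(b-1) dt` is the incomplete Beta function. -/
theorem stmt_3 (α : ℝ) (hα : 1 < α) (i : ℕ) (hi : 0 < i) :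
    MonotoneOn (fun x : ℝ =>
      (∫ t in (0:ℝ)..x, t ^ (1/α) * (1 - t) ^ (i - 1)) /
      (∫ t in (0:ℝ)..x, (1 - t) ^ (i - 1)))
      (Set.Ioc (0:ℝ) 1) :=
  stmt_3_general α hα i
end

section
/- Fix a positive integer K ≥ 2, a real α > 0, and distinct indices i, j ∈ {1, …, K}. If λ, λ′ ∈ [0, ∞)^K agree in every coordinate except possibly the j-th, and λ_j ≤ λ′_j, then I_{i,α+2}(λ; α) / I_{i,α+1}(λ; α) ≤ I_{i,α+2}(λ′; α) / I_{i,α+1}(λ′; α); that is, the ratio I_{i,α+2}/I_{i,α+1} is monotonically increasing with respect to λ_j for every j ≠ i. -/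
open Real MeasureTheory

/-- `I_{i,n}(λ; α) = ∫₀^∞ (z + λ_i)^(-n) exp(-Σ_l (z + λ_l)^(-α)) dz`. -/
noncomputable def Ifun (K : ℕ) (i : Fin K) (n α : ℝ) (L : Fin K → ℝ) : ℝ :=
  ∫ z in Set.Ioi (0:ℝ), (z + L i) ^ (-n) * Real.exp (-∑ l : Fin K, (z + L l) ^ (-α))

open Set
open scoped Nat

/-! With `w(z) = (z + λ_i)^(-(α+1)) exp(-Σ_l (z + λ_l)^(-α))` one has `I_{i,α+1}(λ) = ∫ w` and
`I_{i,α+2}(λ) = ∫ f w` for `f(z) = (z + λ_i)^(-1)`. Since `λ'` differs from `λ` only at `j ≠ i`,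
the integrands for `λ'` are those for `λ` times `g(z) = exp((z + λ_j)^(-α) - (z + λ'_j)^(-α))`.
Both `f` and `g` decrease in `z`, so Chebyshev's integral inequality
`∫ f w · ∫ g w ≤ ∫ f g w · ∫ w` is the claimed inequality between the ratios. -/

theorem MonovaryOn.integral_mul_integral_le {X : Type*} [MeasurableSpace X] {μ : Measure X}
    [SFinite μ] {s : Set X} (hs : MeasurableSet s) {f g w : X → ℝ} (hfg : MonovaryOn f g s)
    (hw : ∀ x ∈ s, 0 ≤ w x) (hW : IntegrableOn w s μ)
    (hfW : IntegrableOn (fun x ↦ f x * w x) s μ) (hgW : IntegrableOn (fun x ↦ g x * w x) s μ)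
    (hfgW : IntegrableOn (fun x ↦ f x * g x * w x) s μ) :
    (∫ x in s, f x * w x ∂μ) * (∫ x in s, g x * w x ∂μ) ≤
      (∫ x in s, f x * g x * w x ∂μ) * ∫ x in s, w x ∂μ := by
  set ν := μ.restrict s
  -- integrate the rearrangement inequality for `f, g` against `w x * w y` over `s ×ˢ s`
  have hmem : ∀ᵐ p ∂ν.prod ν, p ∈ s ×ˢ s := by
    rw [Measure.prod_restrict]
    exact ae_restrict_mem (hs.prod hs)
  have hle : ∀ᵐ p ∂ν.prod ν,
      (f p.1 * w p.1) * (g p.2 * w p.2) + (g p.1 * w p.1) * (f p.2 * w p.2) ≤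
        (f p.1 * g p.1 * w p.1) * w p.2 + w p.1 * (f p.2 * g p.2 * w p.2) := by
    filter_upwards [hmem] with p ⟨hp₁, hp₂⟩
    have := mul_le_mul_of_nonneg_right (hfg.mul_add_mul_le_mul_add_mul hp₁ hp₂)
      (mul_nonneg (hw _ hp₁) (hw _ hp₂))
    linear_combination this
  have := integral_mono_ae ((hfW.mul_prod hgW).add (hgW.mul_prod hfW))
    ((hfgW.mul_prod hW).add (hW.mul_prod hfgW)) hle
  rw [integral_add' (hfW.mul_prod hgW) (hgW.mul_prod hfW),
    integral_add' (hfgW.mul_prod hW) (hW.mul_prod hfgW)] at this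
  rw [integral_prod_mul (fun x ↦ f x * w x) (fun x ↦ g x * w x),
    integral_prod_mul (fun x ↦ g x * w x) (fun x ↦ f x * w x),
    integral_prod_mul (fun x ↦ f x * g x * w x) w,
    integral_prod_mul w (fun x ↦ f x * g x * w x)] at this
  linarith

theorem setIntegral_pos_of_pos {X : Type*} [MeasurableSpace X] {μ : Measure X} {s : Set X}
    {f : X → ℝ} (hs : MeasurableSet s) (hμs : μ s ≠ 0) (hf : IntegrableOn f s μ)
    (hpos : ∀ x ∈ s, 0 < f x) : 0 < ∫ x in s, f x ∂μ := by
  rw [setIntegral_pos_iff_support_of_nonneg_ae _ hf]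
  · rwa [inter_eq_right.2 (show s ⊆ Function.support f from fun x hx ↦ (hpos x hx).ne'),
      pos_iff_ne_zero]
  · filter_upwards [ae_restrict_mem hs] with x hx using (hpos x hx).le

theorem rpow_mul_exp_neg_le {p u : ℝ} (hp : 0 ≤ p) (hu : 0 ≤ u) :
    u ^ p * exp (-u) ≤ ⌈p⌉₊ ! + 1 := by
  set m := ⌈p⌉₊
  have hpow : u ^ p ≤ u ^ m + 1 := by
    rcases le_total u 1 with h | h
    · linarith [rpow_le_one hu h hp, pow_nonneg hu m]
    · have := rpow_le_rpow_of_exponent_le h (Nat.le_ceil p)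
      rw [rpow_natCast] at this
      linarith
  have hfac : u ^ m * exp (-u) ≤ m ! := by
    have := pow_div_factorial_le_exp u hu m
    rw [div_le_iff₀ (by positivity)] at this
    calc u ^ m * exp (-u) ≤ exp u * m ! * exp (-u) := by gcongr
      _ = m ! := by rw [mul_comm (exp u), mul_assoc, ← exp_add, add_neg_cancel, exp_zero, mul_one]
  calc u ^ p * exp (-u) ≤ (u ^ m + 1) * exp (-u) := by gcongr
    _ = u ^ m * exp (-u) + exp (-u) := by ring
    _ ≤ m ! + 1 := by gcongr; exact exp_le_one_iff.2 (by linarith)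

-- `t ^ (-n) * exp (-t ^ (-α))` stays bounded as `t → 0⁺`, which gives integrability near `0`.
theorem rpow_neg_mul_exp_neg_rpow_neg_le {n α t : ℝ} (hn : 0 ≤ n) (hα : 0 < α) (ht : 0 < t) :
    t ^ (-n) * exp (-t ^ (-α)) ≤ ⌈n / α⌉₊ ! + 1 := by
  have : t ^ (-n) = (t ^ (-α)) ^ (n / α) := by
    rw [← rpow_mul ht.le]
    congr 1
    field_simp
  rw [this]
  exact rpow_mul_exp_neg_le (div_nonneg hn hα.le) (rpow_nonneg ht.le _)

theorem antitoneOn_rpow_neg_add_sub_rpow_neg_add {α a b : ℝ} (hα : 0 < α) (hab : a ≤ b) :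
    AntitoneOn (fun z ↦ (z + a) ^ (-α) - (z + b) ^ (-α)) (Ioi (-a)) := by
  have hderiv : ∀ c, ∀ x, 0 < x + c →
      HasDerivAt (fun z ↦ (z + c) ^ (-α)) (-α * (x + c) ^ (-α - 1)) x := fun c x hx ↦ by
    simpa using ((hasDerivAt_id x).add_const c).rpow_const (p := -α) (Or.inl hx.ne')
  have hderiv' : ∀ x ∈ Ioi (-a), HasDerivAt (fun z ↦ (z + a) ^ (-α) - (z + b) ^ (-α))
      (-α * (x + a) ^ (-α - 1) - -α * (x + b) ^ (-α - 1)) x := fun x (hx : -a < x) ↦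
    (hderiv a x (by linarith)).sub (hderiv b x (by linarith))
  refine antitoneOn_of_hasDerivWithinAt_nonpos (convex_Ioi _)
    (fun x hx ↦ (hderiv' x hx).continuousAt.continuousWithinAt)
    (fun x hx ↦ (hderiv' x (interior_subset hx)).hasDerivWithinAt) fun x hx ↦ ?_
  rw [interior_Ioi] at hx
  have hx : -a < x := hx
  have : (x + b) ^ (-α - 1) ≤ (x + a) ^ (-α - 1) :=
    rpow_le_rpow_of_nonpos (by linarith) (by linarith) (by linarith)
  nlinarith

namespace Ifun

noncomputable def integrand (K : ℕ) (i : Fin K) (n α : ℝ) (L : Fin K → ℝ) (z : ℝ) : ℝ :=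
  (z + L i) ^ (-n) * exp (-∑ l : Fin K, (z + L l) ^ (-α))

variable {K : ℕ} {i : Fin K} {n α : ℝ} {L : Fin K → ℝ}

theorem eq_integral_integrand : Ifun K i n α L = ∫ z in Ioi 0, integrand K i n α L z := rfl

theorem integrand_pos (hL : ∀ l, 0 ≤ L l) {z : ℝ} (hz : 0 < z) : 0 < integrand K i n α L z :=
  mul_pos (rpow_pos_of_pos (by linarith [hL i]) _) (exp_pos _)

theorem integrand_le_rpow_mul_exp (hL : ∀ l, 0 ≤ L l) {z : ℝ} (hz : 0 < z) :
    integrand K i n α L z ≤ (z + L i) ^ (-n) * exp (-(z + L i) ^ (-α)) := by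
  refine mul_le_mul_of_nonneg_left (exp_le_exp.2 (neg_le_neg ?_))
    (rpow_nonneg (by linarith [hL i]) _)
  exact Finset.single_le_sum (f := fun l ↦ (z + L l) ^ (-α))
    (fun l _ ↦ rpow_nonneg (by linarith [hL l]) _) (Finset.mem_univ i)

theorem integrableOn_integrand (hα : 0 < α) (hn : 1 < n) (hL : ∀ l, 0 ≤ L l) :
    IntegrableOn (integrand K i n α L) (Ioi 0) := by
  have hmeas : AEStronglyMeasurable (integrand K i n α L) := by
    unfold integrand; fun_prop
  have hle : ∀ z ∈ Ioi (0 : ℝ), ‖integrand K i n α L z‖ ≤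
      (z + L i) ^ (-n) * exp (-(z + L i) ^ (-α)) := fun z hz ↦ by
    rw [norm_of_nonneg (integrand_pos hL hz).le]
    exact integrand_le_rpow_mul_exp hL hz
  have hnear : IntegrableOn (integrand K i n α L) (Ioc 0 1) := by
    refine Integrable.mono' (integrableOn_const (C := (⌈n / α⌉₊ ! + 1 : ℝ))
      measure_Ioc_lt_top.ne enorm_ne_top) hmeas.restrict ?_
    filter_upwards [ae_restrict_mem measurableSet_Ioc] with z ⟨hz, _⟩
    exact (hle z hz).trans
      (rpow_neg_mul_exp_neg_rpow_neg_le (by linarith) hα (by linarith [hL i]))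
  have hfar : IntegrableOn (integrand K i n α L) (Ioi 1) := by
    refine Integrable.mono' (integrableOn_Ioi_rpow_of_lt (by linarith : -n < -1) one_pos)
      hmeas.restrict ?_
    filter_upwards [ae_restrict_mem measurableSet_Ioi] with z (hz : 1 < z)
    calc ‖integrand K i n α L z‖
        ≤ (z + L i) ^ (-n) * exp (-(z + L i) ^ (-α)) := hle z (zero_lt_one.trans hz)
      _ ≤ (z + L i) ^ (-n) := mul_le_of_le_one_right (rpow_nonneg (by linarith [hL i]) _)
          (exp_le_one_iff.2 (neg_nonpos.2 (rpow_nonneg (by linarith [hL i]) _)))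
      _ ≤ z ^ (-n) := rpow_le_rpow_of_nonpos (by linarith) (by linarith [hL i]) (by linarith)
  simpa using hnear.union hfar

theorem integrand_add_one (hL : ∀ l, 0 ≤ L l) {z : ℝ} (hz : 0 < z) :
    integrand K i (n + 1) α L z = (z + L i) ^ (-1 : ℝ) * integrand K i n α L z := by
  unfold integrand
  rw [← mul_assoc, ← rpow_add (by linarith [hL i]), neg_add, add_comm (-n)]

theorem integrand_of_eq_off {j : Fin K} {L' : Fin K → ℝ} (hij : i ≠ j)
    (hagree : ∀ l, l ≠ j → L l = L' l) (z : ℝ) :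
    integrand K i n α L' z =
      exp ((z + L j) ^ (-α) - (z + L' j) ^ (-α)) * integrand K i n α L z := by
  have hsum : ∑ l, (z + L' l) ^ (-α) - ∑ l, (z + L l) ^ (-α) =
      (z + L' j) ^ (-α) - (z + L j) ^ (-α) := by
    rw [← Finset.sum_sub_distrib,
      Finset.sum_eq_single j (fun l _ hl ↦ by rw [hagree l hl, sub_self]) (by simp)]
  unfold integrand
  rw [← hagree i hij, mul_left_comm, ← exp_add]
  congr 2
  linarith

end Ifun

open Ifun in
theorem stmt_5_general (K : ℕ) (α : ℝ) (hα : 0 < α) (i j : Fin K) (hij : i ≠ j)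
    (L L' : Fin K → ℝ) (hL : ∀ l, 0 ≤ L l) (hL' : ∀ l, 0 ≤ L' l)
    (hagree : ∀ l, l ≠ j → L l = L' l) (hj : L j ≤ L' j) :
    Ifun K i (α + 2) α L / Ifun K i (α + 1) α L ≤
      Ifun K i (α + 2) α L' / Ifun K i (α + 1) α L' := by
  set w := integrand K i (α + 1) α L
  set f : ℝ → ℝ := fun z ↦ (z + L i) ^ (-1 : ℝ)
  set g : ℝ → ℝ := fun z ↦ exp ((z + L j) ^ (-α) - (z + L' j) ^ (-α))
  have hfw : EqOn (integrand K i (α + 2) α L) (fun z ↦ f z * w z) (Ioi 0) := fun z hz ↦ by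
    rw [show α + 2 = α + 1 + 1 by ring, integrand_add_one hL hz]
  have hgw : EqOn (integrand K i (α + 1) α L') (fun z ↦ g z * w z) (Ioi 0) := fun z _ ↦
    integrand_of_eq_off hij hagree z
  have hfgw : EqOn (integrand K i (α + 2) α L') (fun z ↦ f z * g z * w z) (Ioi 0) :=
    fun z hz ↦ by rw [integrand_of_eq_off hij hagree, hfw hz]; ring
  have hw_int : IntegrableOn w (Ioi 0) := integrableOn_integrand hα (by linarith) hL
  have hgw_int : IntegrableOn (fun z ↦ g z * w z) (Ioi 0) :=
    (integrableOn_integrand hα (by linarith) hL').congr_fun hgw measurableSet_Ioi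
  have hf : AntitoneOn f (Ioi 0) := fun x (hx : 0 < x) _ _ hxy ↦
    rpow_le_rpow_of_nonpos (by linarith [hL i]) (by linarith) (by norm_num)
  have hg : AntitoneOn g (Ioi 0) := exp_monotone.comp_antitoneOn <|
    (antitoneOn_rpow_neg_add_sub_rpow_neg_add hα hj).mono (Ioi_subset_Ioi (by linarith [hL j]))
  simp only [eq_integral_integrand]
  rw [setIntegral_congr_fun measurableSet_Ioi hfw,
    setIntegral_congr_fun measurableSet_Ioi hgw, setIntegral_congr_fun measurableSet_Ioi hfgw,
    div_le_div_iff₀ (setIntegral_pos_of_pos measurableSet_Ioi (by simp) hw_int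
      fun z hz ↦ integrand_pos hL hz)
    (setIntegral_pos_of_pos measurableSet_Ioi (by simp) hgw_int
      fun z hz ↦ mul_pos (exp_pos _) (integrand_pos hL hz))]
  exact (hf.monovaryOn hg).integral_mul_integral_le measurableSet_Ioi
    (fun z hz ↦ (integrand_pos hL hz).le) hw_int
    ((integrableOn_integrand hα (by linarith) hL).congr_fun hfw measurableSet_Ioi) hgw_int
    ((integrableOn_integrand hα (by linarith) hL').congr_fun hfgw measurableSet_Ioi)

/-- The ratio `I_{i,α+2}/I_{i,α+1}` is monotonically increasing in the coordinate
`λ_j` for every `j ≠ i`. -/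
theorem stmt_5 (K : ℕ) (hK : 2 ≤ K) (α : ℝ) (hα : 0 < α) (i j : Fin K) (hij : i ≠ j)
    (L L' : Fin K → ℝ) (hL : ∀ l, 0 ≤ L l) (hL' : ∀ l, 0 ≤ L' l)
    (hagree : ∀ l, l ≠ j → L l = L' l) (hj : L j ≤ L' j) :
    Ifun K i (α + 2) α L / Ifun K i (α + 1) α L ≤
      Ifun K i (α + 2) α L' / Ifun K i (α + 1) α L' :=
  stmt_5_general K α hα i j hij L L' hL hL' hagree hj
end

section
/- Let F : ℝ → [0, 1] be nondecreasing and differentiable with derivative f ≥ 0, and suppose the ratio f(x)/F(x) is monotonically nonincreasing on [1, ∞) (where F > 0 there). Fix a positive integer K ≥ 2 and for λ ∈ [0, ∞)^K and i ∈ {1, …, K} define φ_i(λ) = ∫₁^∞ f(z + λ_i) · Π_{j≠i} F(z + λ_j) dz and J_i(λ) = ∫₁^∞ (f(z + λ_i)/(z + λ_i)) · Π_{j≠i} F(z + λ_j) dz, and assume φ_i(λ) > 0. Then for every j ≠ i the ratio J_i(λ)/φ_i(λ) is monotonically nondecreasing with respect to λ_j: if λ, λ′ ∈ [0, ∞)^K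 agree in every coordinate except possibly the j-th and λ_j ≤ λ′_j, then J_i(λ)/φ_i(λ) ≤ J_i(λ′)/φ_i(λ′). -/
open Real MeasureTheory

/-- Arm-selection probability `φ_i(λ) = ∫₁^∞ f(z + λ_i) Π_{j ≠ i} F(z + λ_j) dz`. -/
noncomputable def phi (K : ℕ) (F f : ℝ → ℝ) (i : Fin K) (L : Fin K → ℝ) : ℝ :=
  ∫ z in Set.Ioi (1:ℝ), f (z + L i) * ∏ j ∈ Finset.univ.erase i, F (z + L j)

/-- `J_i(λ) = ∫₁^∞ (f(z + λ_i)/(z + λ_i)) Π_{j ≠ i} F(z + λ_j) dz`. -/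
noncomputable def Jfun (K : ℕ) (F f : ℝ → ℝ) (i : Fin K) (L : Fin K → ℝ) : ℝ :=
  ∫ z in Set.Ioi (1:ℝ), f (z + L i) / (z + L i) * ∏ j ∈ Finset.univ.erase i, F (z + L j)

/-!
Put `w(z) = f(z + λ_i) Π_{l≠i} F(z + λ_l)`, the integrand of `φ_i(λ)`. Changing `λ_j` to `λ'_j`
multiplies it by `h(z) = F(z + λ'_j) / F(z + λ_j)`, so with `u(z) = 1 / (z + λ_i)` the claim
reads `(∫ u w) (∫ h w) ≤ (∫ u h w) (∫ w)` over `(1, ∞)`. Both `u` and `h` are nonincreasing —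
`h` because `f / F = (log F)'` is nonincreasing, i.e. `F` is log-concave — so this is
Chebyshev's integral inequality for similarly ordered functions against the weight `w ≥ 0`.
-/

theorem MonovaryOn.setIntegral_mul_setIntegral_le {α : Type*} [MeasurableSpace α]
    {μ : Measure α} {s : Set α} (hs : MeasurableSet s) {u h w : α → ℝ}
    (huh : MonovaryOn u h s) (hw : ∀ x ∈ s, 0 ≤ w x)
    (hW : IntegrableOn w s μ) (hU : IntegrableOn (fun x => u x * w x) s μ)
    (hH : IntegrableOn (fun x => h x * w x) s μ)
    (hI : IntegrableOn (fun x => u x * (h x * w x)) s μ) :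
    (∫ x in s, u x * w x ∂μ) * (∫ x in s, h x * w x ∂μ) ≤
      (∫ x in s, u x * (h x * w x) ∂μ) * ∫ x in s, w x ∂μ := by
  rw [IntegrableOn] at hW hU hH hI
  set W := ∫ x in s, w x ∂μ
  set U := ∫ x in s, u x * w x ∂μ
  set H := ∫ x in s, h x * w x ∂μ
  set I := ∫ x in s, u x * (h x * w x) ∂μ
  -- Integrate `(u x - u y) * (h x - h y) * w x * w y ≥ 0` first in `y`, then in `x`.
  have hcov : ∀ x ∈ s, 0 ≤ u x * (h x * w x) * W - u x * w x * H - h x * w x * U + w x * I := by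
    intro x hx
    calc 0 ≤ ∫ y in s, (u x - u y) * (h x - h y) * (w x * w y) ∂μ :=
          setIntegral_nonneg hs fun y hy =>
            mul_nonneg (huh.sub_mul_sub_nonneg hy hx) (mul_nonneg (hw x hx) (hw y hy))
      _ = ∫ y in s, (u x * (h x * w x) * w y - u x * w x * (h y * w y)
            - h x * w x * (u y * w y) + w x * (u y * (h y * w y))) ∂μ := by
        congr 1; ext y; ring
      _ = u x * (h x * w x) * W - u x * w x * H - h x * w x * U + w x * I := by
        rw [integral_add (by fun_prop) (by fun_prop), integral_sub (by fun_prop) (by fun_prop),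
          integral_sub (by fun_prop) (by fun_prop)]
        simp only [integral_const_mul]
        rfl
  have hint : ∫ x in s, (u x * (h x * w x) * W - u x * w x * H - h x * w x * U + w x * I) ∂μ =
      2 * (I * W - U * H) := by
    rw [integral_add (by fun_prop) (by fun_prop), integral_sub (by fun_prop) (by fun_prop),
      integral_sub (by fun_prop) (by fun_prop)]
    simp only [integral_mul_const]
    ring
  have hmean : 0 ≤ 2 * (I * W - U * H) := hint ▸ setIntegral_nonneg hs hcov
  linarith

theorem Finset.prod_eq_div_mul_prod_of_eq_of_ne {ι M : Type*} [CommGroupWithZero M]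
    {s : Finset ι} {g g' : ι → M} {j : ι} (hj : j ∈ s) (hgg' : ∀ l ∈ s, l ≠ j → g' l = g l)
    (hgj : g j ≠ 0) : ∏ l ∈ s, g' l = g' j / g j * ∏ l ∈ s, g l := by
  classical
  rw [← Finset.mul_prod_erase s g hj, ← Finset.mul_prod_erase s g' hj,
    Finset.prod_congr rfl fun l hl => hgg' l (Finset.mem_erase.1 hl).2 (Finset.ne_of_mem_erase hl)]
  field_simp

theorem antitoneOn_div_comp_add {F f : ℝ → ℝ} {x₀ a b : ℝ}
    (hderiv : ∀ x, HasDerivAt F (f x) x) (hFpos : ∀ x, x₀ ≤ x → 0 < F x)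
    (hratio : AntitoneOn (fun x => f x / F x) (Set.Ici x₀)) (hab : a ≤ b) :
    AntitoneOn (fun z => F (z + b) / F (z + a)) (Set.Ici (x₀ - a)) := by
  have hpos : ∀ z ∈ Set.Ici (x₀ - a), ∀ c, a ≤ c → 0 < F (z + c) := fun z hz c hc =>
    hFpos _ (by linarith [Set.mem_Ici.1 hz])
  have hd : ∀ z ∈ Set.Ici (x₀ - a), HasDerivAt (fun z => F (z + b) / F (z + a))
      ((f (z + b) * F (z + a) - F (z + b) * f (z + a)) / F (z + a) ^ 2) z := fun z hz =>
    ((hderiv _).comp_add_const z b).div ((hderiv _).comp_add_const z a)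
      (hpos z hz a le_rfl).ne'
  refine antitoneOn_of_deriv_nonpos (convex_Ici _)
    (fun z hz => (hd z hz).continuousAt.continuousWithinAt)
    (fun z hz => (hd z (interior_subset hz)).differentiableAt.differentiableWithinAt)
    fun z hz => ?_
  have hz : x₀ - a ≤ z := interior_subset hz
  rw [(hd z hz).deriv]
  have hle : f (z + b) / F (z + b) ≤ f (z + a) / F (z + a) :=
    hratio (Set.mem_Ici.2 (by linarith)) (Set.mem_Ici.2 (by linarith)) (by linarith)
  rw [div_le_div_iff₀ (hpos z hz b hab) (hpos z hz a le_rfl)] at hle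
  exact div_nonpos_of_nonpos_of_nonneg (by linarith) (sq_nonneg _)

section ArmIntegrals

variable {K : ℕ} {F f : ℝ → ℝ} {i j : Fin K} {L L' : Fin K → ℝ}

theorem Jfun_eq_setIntegral_inv_mul :
    Jfun K F f i L = ∫ z in Set.Ioi 1,
      (z + L i)⁻¹ * (f (z + L i) * ∏ l ∈ Finset.univ.erase i, F (z + L l)) := by
  unfold Jfun
  congr 1; ext z; ring

theorem prod_erase_eq_div_mul_prod (hij : j ≠ i) (hagree : ∀ l, l ≠ j → L l = L' l) {z : ℝ}
    (hz : F (z + L j) ≠ 0) :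
    ∏ l ∈ Finset.univ.erase i, F (z + L' l) =
      F (z + L' j) / F (z + L j) * ∏ l ∈ Finset.univ.erase i, F (z + L l) :=
  Finset.prod_eq_div_mul_prod_of_eq_of_ne (g := fun l => F (z + L l))
    (Finset.mem_erase.2 ⟨hij, Finset.mem_univ j⟩) (fun l _ hl => by rw [hagree l hl]) hz

theorem phi_eq_setIntegral_div_mul (hij : j ≠ i) (hagree : ∀ l, l ≠ j → L l = L' l)
    (hF : ∀ z ∈ Set.Ioi (1 : ℝ), F (z + L j) ≠ 0) :
    phi K F f i L' = ∫ z in Set.Ioi 1, F (z + L' j) / F (z + L j) *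
      (f (z + L i) * ∏ l ∈ Finset.univ.erase i, F (z + L l)) := by
  refine setIntegral_congr_fun measurableSet_Ioi fun z hz => ?_
  rw [hagree i hij.symm, prod_erase_eq_div_mul_prod hij hagree (hF z hz)]
  ring

theorem Jfun_eq_setIntegral_inv_mul_div_mul (hij : j ≠ i)
    (hagree : ∀ l, l ≠ j → L l = L' l) (hF : ∀ z ∈ Set.Ioi (1 : ℝ), F (z + L j) ≠ 0) :
    Jfun K F f i L' = ∫ z in Set.Ioi 1, (z + L i)⁻¹ * (F (z + L' j) / F (z + L j) *
      (f (z + L i) * ∏ l ∈ Finset.univ.erase i, F (z + L l))) := by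
  refine setIntegral_congr_fun measurableSet_Ioi fun z hz => ?_
  rw [hagree i hij.symm, prod_erase_eq_div_mul_prod hij hagree (hF z hz)]
  ring

end ArmIntegrals

theorem stmt_6_general (F f : ℝ → ℝ)
    (hderiv : ∀ x, HasDerivAt F (f x) x) (hf : ∀ x, 0 ≤ f x)
    (hFpos : ∀ x, 1 ≤ x → 0 < F x)
    (hratio : AntitoneOn (fun x => f x / F x) (Set.Ici (1:ℝ)))
    (K : ℕ) (i j : Fin K) (hij : j ≠ i)
    (L L' : Fin K → ℝ) (hL : ∀ l, 0 ≤ L l)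
    (hagree : ∀ l, l ≠ j → L l = L' l) (hj : L j ≤ L' j)
    (hphi : 0 < phi K F f i L) (hphi' : 0 < phi K F f i L') :
    Jfun K F f i L / phi K F f i L ≤ Jfun K F f i L' / phi K F f i L' := by
  have hshift : ∀ z ∈ Set.Ioi (1 : ℝ), ∀ l, 1 < z + L l := fun z hz l => by
    linarith [hL l, Set.mem_Ioi.1 hz]
  have hFL : ∀ z ∈ Set.Ioi (1 : ℝ), F (z + L j) ≠ 0 := fun z hz =>
    (hFpos _ (hshift z hz j).le).ne'
  have hinv : ∀ᵐ z ∂volume.restrict (Set.Ioi (1 : ℝ)), ‖(z + L i)⁻¹‖ ≤ 1 :=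
    (ae_restrict_iff' measurableSet_Ioi).2 <| ae_of_all _ fun z hz => by
      rw [norm_inv, Real.norm_of_nonneg (by linarith [hshift z hz i])]
      exact inv_le_one_of_one_le₀ (hshift z hz i).le
  rw [phi_eq_setIntegral_div_mul hij hagree hFL] at hphi' ⊢
  rw [div_le_div_iff₀ hphi hphi', Jfun_eq_setIntegral_inv_mul,
    Jfun_eq_setIntegral_inv_mul_div_mul hij hagree hFL]
  have hW := Integrable.of_integral_ne_zero hphi.ne'
  have hH := Integrable.of_integral_ne_zero hphi'.ne'
  have hu : AntitoneOn (fun z => (z + L i)⁻¹) (Set.Ioi 1) := fun x hx y _ hxy =>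
    inv_anti₀ (by linarith [hshift x hx i]) (by linarith)
  have hh : AntitoneOn (fun z => F (z + L' j) / F (z + L j)) (Set.Ioi 1) :=
    (antitoneOn_div_comp_add hderiv hFpos hratio hj).mono fun z hz =>
      Set.mem_Ici.2 (by linarith [hshift z hz j])
  have hw : ∀ z ∈ Set.Ioi (1 : ℝ), 0 ≤ f (z + L i) * ∏ l ∈ Finset.univ.erase i, F (z + L l) :=
    fun z hz => mul_nonneg (hf _) (Finset.prod_nonneg fun l _ => (hFpos _ (hshift z hz l).le).le)
  exact MonovaryOn.setIntegral_mul_setIntegral_le measurableSet_Ioi (hu.monovaryOn hh) hw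
    hW (hW.bdd_mul (by fun_prop) hinv) hH (hH.bdd_mul (by fun_prop) hinv)

/-- If `F : ℝ → [0,1]` is nondecreasing and differentiable with derivative `f ≥ 0`,
`F > 0` on `[1, ∞)` and `f/F` is nonincreasing there, then the ratio `J_i/φ_i` is
monotonically nondecreasing with respect to the coordinate `λ_j` for every `j ≠ i`. -/
theorem stmt_6 (F f : ℝ → ℝ)
    (hF0 : ∀ x, 0 ≤ F x) (hF1 : ∀ x, F x ≤ 1) (hFmono : Monotone F)
    (hderiv : ∀ x, HasDerivAt F (f x) x) (hf : ∀ x, 0 ≤ f x)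
    (hFpos : ∀ x, 1 ≤ x → 0 < F x)
    (hratio : AntitoneOn (fun x => f x / F x) (Set.Ici (1:ℝ)))
    (K : ℕ) (hK : 2 ≤ K) (i j : Fin K) (hij : j ≠ i)
    (L L' : Fin K → ℝ) (hL : ∀ l, 0 ≤ L l) (hL' : ∀ l, 0 ≤ L' l)
    (hagree : ∀ l, l ≠ j → L l = L' l) (hj : L j ≤ L' j)
    (hphi : 0 < phi K F f i L) (hphi' : 0 < phi K F f i L') :
    Jfun K F f i L / phi K F f i L ≤ Jfun K F f i L' / phi K F f i L' :=
  stmt_6_general F f hderiv hf hFpos hratio K i j hij L L' hL hagree hj hphi hphi'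
end

section
/- Fix a positive integer K, a real α > 0, and λ ∈ [0, ∞)^K with min_{j} λ_j = 0. For an index i, let s be the number of indices j ∈ {1, …, K} with λ_j ≤ λ_i. Then I_{i,α+2}(λ; α) / I_{i,α+1}(λ; α) ≤ Γ(1 + 1/α) · s^{−1/α}; moreover, if λ_i > 0, then also I_{i,α+2}(λ; α) / I_{i,α+1}(λ; α) ≤ α / ((α + 1) λ_i). -/
/-!
After the substitution `u = z + λ_i`, both integrals are taken against the weight
`Φ(u) = exp (-∑ l, (u - λ_i + λ_l) ^ (-α))` on `u > λ_i`. This weight is nondecreasing, and so is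
`Φ(u) exp (s u ^ (-α))`: each of the `s` indices with `λ_l ≤ λ_i` contributes a term
`(u - λ_i + λ_l) ^ (-α) - u ^ (-α)`, which decreases in `u` by convexity of `u ^ (-α)`.
The ratio is a weighted mean of the decreasing function `u⁻¹`, and Chebyshev's integral inequality
lets us discard a nondecreasing factor of the weight. Against `u ^ (-(α + 1))` on `(λ_i, ∞)` what
is left is `α / ((α + 1) λ_i)`. Against `u ^ (-(α + 1)) exp (-s u ^ (-α))` on `(0, ∞)`, with
`Φ(u) exp (s u ^ (-α))` extended by `0` below `λ_i`, it is a ratio of two Gamma integrals,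
`Γ(1 + 1/α) s ^ (-1/α)`.
-/

open Real MeasureTheory

open Set
open scoped Finset

theorem inv_mul_rpow_neg {u : ℝ} (hu : 0 < u) (c : ℝ) : u⁻¹ * u ^ (-c) = u ^ (-(c + 1)) := by
  rw [← rpow_neg_one, ← rpow_add hu, neg_add, add_comm]

section Chebyshev

variable {X : Type*} [LinearOrder X] [MeasurableSpace X] {μ : Measure X} [SFinite μ]
  {s : Set X} {g φ p : X → ℝ}

/-- Chebyshev's integral inequality. -/
theorem setIntegral_antitoneOn_mul_monotoneOn_le (hs : MeasurableSet s)
    (hg : AntitoneOn g s) (hφ : MonotoneOn φ s) (hp : ∀ x ∈ s, 0 ≤ p x)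
    (hp_int : IntegrableOn p s μ) (hgp_int : IntegrableOn (fun x => g x * p x) s μ)
    (hφp_int : IntegrableOn (fun x => φ x * p x) s μ)
    (hgφp_int : IntegrableOn (fun x => g x * φ x * p x) s μ) :
    (∫ x in s, g x * φ x * p x ∂μ) * ∫ x in s, p x ∂μ ≤
      (∫ x in s, g x * p x ∂μ) * ∫ x in s, φ x * p x ∂μ := by
  set ν := μ.restrict s
  have hexpand : (fun x : X × X => (g x.1 - g x.2) * (φ x.2 - φ x.1) * (p x.1 * p x.2)) =
      fun x => (g x.1 * p x.1) * (φ x.2 * p x.2) - (g x.1 * φ x.1 * p x.1) * p x.2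
        - p x.1 * (g x.2 * φ x.2 * p x.2) + (φ x.1 * p x.1) * (g x.2 * p x.2) := by
    ext x; ring
  have hnonneg : 0 ≤ ∫ x, (g x.1 - g x.2) * (φ x.2 - φ x.1) * (p x.1 * p x.2) ∂ν.prod ν := by
    refine integral_nonneg_of_ae ?_
    have hmem : ∀ᵐ x ∂ν.prod ν, x.1 ∈ s ∧ x.2 ∈ s := by
      rw [Measure.prod_restrict]
      exact ae_restrict_mem (hs.prod hs)
    filter_upwards [hmem] with ⟨x, y⟩ ⟨hx, hy⟩
    have hsign : 0 ≤ (g x - g y) * (φ y - φ x) := by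
      rcases le_total x y with hxy | hyx
      · exact mul_nonneg (sub_nonneg.2 (hg hx hy hxy)) (sub_nonneg.2 (hφ hx hy hxy))
      · exact mul_nonneg_of_nonpos_of_nonpos (sub_nonpos.2 (hg hy hx hyx))
          (sub_nonpos.2 (hφ hy hx hyx))
    exact mul_nonneg hsign (mul_nonneg (hp x hx) (hp y hy))
  have i1 := hgp_int.mul_prod hφp_int
  have i2 := hgφp_int.mul_prod hp_int
  have i3 := hp_int.mul_prod hgφp_int
  have i12 : Integrable (fun x : X × X => g x.1 * p x.1 * (φ x.2 * p x.2) -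
      g x.1 * φ x.1 * p x.1 * p x.2) (ν.prod ν) := i1.sub i2
  have i123 : Integrable (fun x : X × X => g x.1 * p x.1 * (φ x.2 * p x.2) -
      g x.1 * φ x.1 * p x.1 * p x.2 - p x.1 * (g x.2 * φ x.2 * p x.2)) (ν.prod ν) := i12.sub i3
  rw [hexpand, integral_add i123 (hφp_int.mul_prod hgp_int), integral_sub i12 i3,
    integral_sub i1 i2, integral_prod_mul (fun x => g x * p x) (fun x => φ x * p x),
    integral_prod_mul (fun x => g x * φ x * p x) p,
    integral_prod_mul p (fun x => g x * φ x * p x),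
    integral_prod_mul (fun x => φ x * p x) (fun x => g x * p x)] at hnonneg
  linarith

theorem setIntegral_mul_div_le_of_antitoneOn_monotoneOn (hs : MeasurableSet s)
    (hg : AntitoneOn g s) (hφ : MonotoneOn φ s) (hp : ∀ x ∈ s, 0 ≤ p x)
    (hg0 : ∀ x ∈ s, 0 ≤ g x) (hφ0 : ∀ x ∈ s, 0 ≤ φ x) (hφ1 : ∀ x ∈ s, φ x ≤ 1)
    (hφ_meas : AEStronglyMeasurable φ (μ.restrict s))
    (hp_int : IntegrableOn p s μ) (hgp_int : IntegrableOn (fun x => g x * p x) s μ)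
    (hp_pos : 0 < ∫ x in s, p x ∂μ) :
    (∫ x in s, g x * φ x * p x ∂μ) / (∫ x in s, φ x * p x ∂μ) ≤
      (∫ x in s, g x * p x ∂μ) / ∫ x in s, p x ∂μ := by
  have hφ_bound : ∀ᵐ x ∂μ.restrict s, ‖φ x‖ ≤ 1 := by
    filter_upwards [ae_restrict_mem hs] with x hx
    rw [Real.norm_eq_abs, abs_of_nonneg (hφ0 x hx)]
    exact hφ1 x hx
  have hφp_int : IntegrableOn (fun x => φ x * p x) s μ := hp_int.bdd_mul hφ_meas hφ_bound
  have hgφp_int : IntegrableOn (fun x => g x * φ x * p x) s μ := by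
    simpa only [IntegrableOn, mul_left_comm, mul_assoc] using hgp_int.bdd_mul hφ_meas hφ_bound
  have hcheb := setIntegral_antitoneOn_mul_monotoneOn_le hs hg hφ hp hp_int hgp_int hφp_int hgφp_int
  rcases (setIntegral_nonneg hs fun x hx => mul_nonneg (hφ0 x hx) (hp x hx)).eq_or_lt
    with hzero | hpos
  · rw [← hzero, div_zero]
    exact div_nonneg (setIntegral_nonneg hs fun x hx => mul_nonneg (hg0 x hx) (hp x hx))
      hp_pos.le
  · rw [div_le_div_iff₀ hpos hp_pos]
    linarith

end Chebyshev

theorem setIntegral_Ioi_add_right (f : ℝ → ℝ) (a : ℝ) :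
    ∫ z in Ioi 0, f (z + a) = ∫ u in Ioi a, f u := by
  have := (measurePreserving_add_right volume a).setIntegral_preimage_emb
    (measurableEmbedding_addRight a) f (Ioi a)
  rwa [preimage_add_const_Ioi, sub_self] at this

section RpowNegSubstitution

variable {α : ℝ}

theorem setIntegral_Ioi_rpow_neg_mul_comp (hα : 0 < α) (h : ℝ → ℝ) :
    ∫ u in Ioi 0, u ^ (-(α + 1)) * h (u ^ (-α)) = α⁻¹ * ∫ y in Ioi 0, h y := by
  have hcov := integral_comp_rpow_Ioi h (neg_ne_zero.2 hα.ne')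
  rw [abs_neg, abs_of_pos hα, sub_eq_add_neg, ← neg_add] at hcov
  simp only [smul_eq_mul, mul_assoc] at hcov
  rw [integral_const_mul] at hcov
  rw [← hcov, inv_mul_cancel_left₀ hα.ne']

theorem integrableOn_Ioi_rpow_neg_mul_comp_iff (hα : 0 < α) (h : ℝ → ℝ) :
    IntegrableOn (fun u => u ^ (-(α + 1)) * h (u ^ (-α))) (Ioi 0) ↔ IntegrableOn h (Ioi 0) := by
  rw [← integrableOn_Ioi_comp_rpow_iff' h (neg_ne_zero.2 hα.ne'), sub_eq_add_neg, ← neg_add]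
  rfl

variable {σ q : ℝ}

theorem integrableOn_Ioi_rpow_neg_mul_rpow_mul_exp (hα : 0 < α) (hσ : 0 < σ) (hq : -1 < q) :
    IntegrableOn (fun u => u ^ (-(α + 1)) * ((u ^ (-α)) ^ q * exp (-(σ * u ^ (-α)))))
      (Ioi 0) := by
  rw [integrableOn_Ioi_rpow_neg_mul_comp_iff hα (fun y => y ^ q * exp (-(σ * y)))]
  simpa [rpow_one] using integrableOn_rpow_mul_exp_neg_mul_rpow hq one_pos hσ

theorem integral_Ioi_rpow_neg_mul_rpow_mul_exp (hα : 0 < α) (hσ : 0 < σ) (hq : -1 < q) :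
    ∫ u in Ioi 0, u ^ (-(α + 1)) * ((u ^ (-α)) ^ q * exp (-(σ * u ^ (-α)))) =
      α⁻¹ * ((1 / σ) ^ (q + 1) * Gamma (q + 1)) := by
  rw [setIntegral_Ioi_rpow_neg_mul_comp hα (fun y => y ^ q * exp (-(σ * y))),
    ← integral_rpow_mul_exp_neg_mul_Ioi (by linarith) hσ, add_sub_cancel_right]

theorem integrableOn_Ioi_rpow_neg_mul_exp (hα : 0 < α) (hσ : 0 < σ) :
    IntegrableOn (fun u => u ^ (-(α + 1)) * exp (-(σ * u ^ (-α)))) (Ioi 0) := by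
  simpa only [rpow_zero, one_mul] using
    integrableOn_Ioi_rpow_neg_mul_rpow_mul_exp hα hσ (q := 0) (by norm_num)

theorem integral_Ioi_rpow_neg_mul_exp (hα : 0 < α) (hσ : 0 < σ) :
    ∫ u in Ioi 0, u ^ (-(α + 1)) * exp (-(σ * u ^ (-α))) = α⁻¹ * σ⁻¹ := by
  simpa only [rpow_zero, one_mul, zero_add, rpow_one, Gamma_one, mul_one, one_div] using
    integral_Ioi_rpow_neg_mul_rpow_mul_exp hα hσ (q := 0) (by norm_num)

theorem rpow_neg_rpow_one_div {u : ℝ} (hu : 0 ≤ u) (hα : α ≠ 0) : (u ^ (-α)) ^ (1 / α) = u⁻¹ := by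
  rw [← rpow_mul hu, neg_mul, mul_one_div_cancel hα, rpow_neg_one]

theorem integrableOn_Ioi_inv_mul_rpow_neg_mul_exp (hα : 0 < α) (hσ : 0 < σ) :
    IntegrableOn (fun u => u⁻¹ * (u ^ (-(α + 1)) * exp (-(σ * u ^ (-α))))) (Ioi 0) := by
  refine (integrableOn_Ioi_rpow_neg_mul_rpow_mul_exp hα hσ (q := 1 / α)
    (by linarith [one_div_pos.2 hα])).congr_fun (fun u hu => ?_) measurableSet_Ioi
  simp only [rpow_neg_rpow_one_div (le_of_lt hu) hα.ne']
  ring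

theorem integral_Ioi_inv_mul_rpow_neg_mul_exp_div (hα : 0 < α) (hσ : 0 < σ) :
    (∫ u in Ioi 0, u⁻¹ * (u ^ (-(α + 1)) * exp (-(σ * u ^ (-α))))) /
        (∫ u in Ioi 0, u ^ (-(α + 1)) * exp (-(σ * u ^ (-α)))) =
      Gamma (1 + 1 / α) * σ ^ (-(1 / α)) := by
  have hmoment : ∫ u in Ioi 0, u⁻¹ * (u ^ (-(α + 1)) * exp (-(σ * u ^ (-α)))) =
      α⁻¹ * ((1 / σ) ^ (1 / α + 1) * Gamma (1 / α + 1)) := by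
    rw [← integral_Ioi_rpow_neg_mul_rpow_mul_exp hα hσ (by linarith [one_div_pos.2 hα])]
    refine setIntegral_congr_fun measurableSet_Ioi fun u hu => ?_
    rw [rpow_neg_rpow_one_div (le_of_lt hu) hα.ne']
    ring
  rw [hmoment, integral_Ioi_rpow_neg_mul_exp hα hσ, rpow_add_one (by positivity), one_div σ,
    inv_rpow hσ.le, ← rpow_neg hσ.le, add_comm]
  field_simp

end RpowNegSubstitution

theorem setIntegral_Ioi_rpow_mul_div_le {α a : ℝ} {Φ : ℝ → ℝ} (hα : 0 < α) (ha : 0 < a)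
    (hΦ_meas : Measurable Φ) (hΦ0 : ∀ u ∈ Ioi a, 0 ≤ Φ u) (hΦ1 : ∀ u ∈ Ioi a, Φ u ≤ 1)
    (hΦ : MonotoneOn Φ (Ioi a)) :
    (∫ u in Ioi a, u ^ (-(α + 2)) * Φ u) / (∫ u in Ioi a, u ^ (-(α + 1)) * Φ u) ≤
      α / ((α + 1) * a) := by
  have hpos : ∀ u ∈ Ioi a, 0 < u := fun u hu => ha.trans hu
  have hp_int : IntegrableOn (fun u : ℝ => u ^ (-(α + 1))) (Ioi a) :=
    integrableOn_Ioi_rpow_of_lt (by linarith) ha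
  have hgp : ∀ u ∈ Ioi a, u⁻¹ * u ^ (-(α + 1)) = u ^ (-(α + 2)) := fun u hu => by
    rw [inv_mul_rpow_neg (hpos u hu)]; ring_nf
  have hgp_int : IntegrableOn (fun u : ℝ => u⁻¹ * u ^ (-(α + 1))) (Ioi a) :=
    (integrableOn_Ioi_rpow_of_lt (by linarith) ha).congr_fun (fun u hu => (hgp u hu).symm)
      measurableSet_Ioi
  have hP : ∫ u in Ioi a, u ^ (-(α + 1)) = a ^ (-α) / α := by
    rw [integral_Ioi_rpow_of_lt (by linarith) ha, show -(α + 1) + 1 = -α by ring, neg_div_neg_eq]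
  have hGP : ∫ u in Ioi a, u⁻¹ * u ^ (-(α + 1)) = a ^ (-(α + 1)) / (α + 1) := by
    rw [setIntegral_congr_fun measurableSet_Ioi hgp, integral_Ioi_rpow_of_lt (by linarith) ha,
      show -(α + 2) + 1 = -(α + 1) by ring, neg_div_neg_eq]
  have hcheb := setIntegral_mul_div_le_of_antitoneOn_monotoneOn measurableSet_Ioi
    (fun u hu v _ huv => inv_anti₀ (hpos u hu) huv) hΦ
    (fun u hu => (rpow_pos_of_pos (hpos u hu) _).le) (fun u hu => (inv_pos.2 (hpos u hu)).le)
    hΦ0 hΦ1 hΦ_meas.aestronglyMeasurable hp_int hgp_int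
    (by rw [hP]; exact div_pos (rpow_pos_of_pos ha _) hα)
  have hratio : a ^ (-(α + 1)) / (α + 1) / (a ^ (-α) / α) = α / ((α + 1) * a) := by
    rw [← inv_mul_rpow_neg ha]
    field_simp [(rpow_pos_of_pos ha (-α)).ne']
  rw [hGP, hP, hratio] at hcheb
  convert hcheb using 2 <;> refine setIntegral_congr_fun measurableSet_Ioi fun u hu => ?_
  · rw [← hgp u hu]; ring
  · ring

theorem setIntegral_Ioi_rpow_mul_div_le_Gamma {α σ a : ℝ} {Φ : ℝ → ℝ} (hα : 0 < α)
    (hσ : 0 < σ) (ha : 0 ≤ a) (hΦ_meas : Measurable Φ) (hΦ0 : ∀ u ∈ Ioi a, 0 ≤ Φ u)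
    (hΦ_le : ∀ u ∈ Ioi a, Φ u ≤ exp (-(σ * u ^ (-α))))
    (hΦ : MonotoneOn (fun u => Φ u * exp (σ * u ^ (-α))) (Ioi a)) :
    (∫ u in Ioi a, u ^ (-(α + 2)) * Φ u) / (∫ u in Ioi a, u ^ (-(α + 1)) * Φ u) ≤
      Gamma (1 + 1 / α) * σ ^ (-(1 / α)) := by
  set E : ℝ → ℝ := fun u => exp (-(σ * u ^ (-α)))
  set φ : ℝ → ℝ := (Ioi a).indicator fun u => Φ u * exp (σ * u ^ (-α))
  have hφ0 : ∀ u, 0 ≤ φ u := fun u =>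
    indicator_nonneg (fun u hu => mul_nonneg (hΦ0 u hu) (exp_pos _).le) u
  have hφ1 : ∀ u, φ u ≤ 1 := by
    refine fun u => indicator_apply_le' (fun hu => ?_) fun _ => zero_le_one
    calc Φ u * exp (σ * u ^ (-α)) ≤ E u * exp (σ * u ^ (-α)) :=
          mul_le_mul_of_nonneg_right (hΦ_le u hu) (exp_pos _).le
      _ = 1 := by rw [← exp_add, neg_add_cancel, exp_zero]
  have hφ : MonotoneOn φ (Ioi 0) := by
    intro u _ v _ huv
    by_cases hu : u ∈ Ioi a
    · have hv : v ∈ Ioi a := lt_of_lt_of_le hu huv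
      simpa only [φ, indicator_of_mem hu, indicator_of_mem hv] using hΦ hu hv huv
    · simpa only [φ, indicator_of_notMem hu] using hφ0 v
  have hφE : ∀ u, φ u * E u = (Ioi a).indicator Φ u := fun u => by
    by_cases hu : u ∈ Ioi a
    · simp only [φ, E, indicator_of_mem hu, mul_assoc, ← exp_add, add_neg_cancel, exp_zero,
        mul_one]
    · simp only [φ, indicator_of_notMem hu, zero_mul]
  have hrestrict : ∀ c : ℝ,
      ∫ u in Ioi 0, u ^ (-c) * φ u * E u = ∫ u in Ioi a, u ^ (-c) * Φ u := by
    intro c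
    simp only [mul_assoc, hφE, ← indicator_mul_right _ (fun u => u ^ (-c))]
    rw [setIntegral_indicator measurableSet_Ioi, Ioi_inter_Ioi, max_eq_right ha]
  have hcheb := setIntegral_mul_div_le_of_antitoneOn_monotoneOn measurableSet_Ioi
    (fun u hu v _ huv => inv_anti₀ hu huv) hφ
    (fun u hu => mul_nonneg (rpow_nonneg (le_of_lt hu) _) (exp_pos _).le)
    (fun u hu => (inv_pos.2 hu).le) (fun u _ => hφ0 u) (fun u _ => hφ1 u)
    ((hΦ_meas.mul (by fun_prop)).indicator measurableSet_Ioi).aestronglyMeasurable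
    (integrableOn_Ioi_rpow_neg_mul_exp hα hσ) (integrableOn_Ioi_inv_mul_rpow_neg_mul_exp hα hσ)
    (by rw [integral_Ioi_rpow_neg_mul_exp hα hσ]; positivity)
  rw [integral_Ioi_inv_mul_rpow_neg_mul_exp_div hα hσ] at hcheb
  convert hcheb using 2 <;> rw [← hrestrict] <;>
    refine setIntegral_congr_fun measurableSet_Ioi fun u hu => ?_
  · rw [show α + 2 = α + 1 + 1 by ring, ← inv_mul_rpow_neg hu]; ring
  · ring

theorem antitoneOn_sub_rpow_neg_sub_rpow_neg {α c : ℝ} (hα : 0 < α) (hc : 0 ≤ c) :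
    AntitoneOn (fun u => (u - c) ^ (-α) - u ^ (-α)) (Ioi c) := by
  have hderiv : ∀ u ∈ Ioi c, HasDerivAt (fun u => (u - c) ^ (-α) - u ^ (-α))
      (-α * (u - c) ^ (-α - 1) - -α * u ^ (-α - 1)) u := fun u hu => by
    have h₁ := ((hasDerivAt_id u).sub_const c).rpow_const (p := -α) (Or.inl (sub_pos.2 hu).ne')
    have h₂ := hasDerivAt_rpow_const (p := -α) (Or.inl (hc.trans_lt hu).ne')
    simpa only [id, one_mul] using h₁.fun_sub h₂
  refine antitoneOn_of_deriv_nonpos (convex_Ioi c)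
    (fun u hu => (hderiv u hu).continuousAt.continuousWithinAt)
    (fun u hu => (hderiv u (interior_subset hu)).differentiableAt.differentiableWithinAt)
    fun u hu => ?_
  rw [interior_Ioi] at hu
  rw [(hderiv u hu).deriv, sub_nonpos]
  have : u ^ (-α - 1) ≤ (u - c) ^ (-α - 1) :=
    rpow_le_rpow_of_nonpos (sub_pos.2 hu) (sub_le_self u hc) (by linarith)
  nlinarith

theorem rpow_neg_sub_ite_nonneg {α a b u : ℝ} (hα : 0 ≤ α) (hb : 0 ≤ b) (hu : a < u) :
    0 ≤ (u - a + b) ^ (-α) - if b ≤ a then u ^ (-α) else 0 := by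
  split_ifs with hba
  · exact sub_nonneg.2 (rpow_le_rpow_of_nonpos (by linarith) (by linarith) (by linarith))
  · rw [sub_zero]
    exact rpow_nonneg (by linarith) _

theorem antitoneOn_rpow_neg_sub_ite {α a b : ℝ} (hα : 0 < α) (hb : 0 ≤ b) :
    AntitoneOn (fun u => (u - a + b) ^ (-α) - if b ≤ a then u ^ (-α) else 0) (Ioi a) := by
  split_ifs with hba
  · simp only [sub_add]
    exact (antitoneOn_sub_rpow_neg_sub_rpow_neg hα (sub_nonneg.2 hba)).mono
      (Ioi_subset_Ioi (sub_le_self a hb))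
  · simp only [sub_zero]
    exact fun u hu v _ huv =>
      rpow_le_rpow_of_nonpos (by linarith [mem_Ioi.1 hu]) (by linarith) (by linarith)

section ShiftedWeight

variable {K : ℕ} (L : Fin K → ℝ) (α a : ℝ)

noncomputable def shiftedWeight (u : ℝ) : ℝ :=
  exp (-∑ l, (u - a + L l) ^ (-α))

theorem Ifun_eq_setIntegral_Ioi (i : Fin K) (n : ℝ) :
    Ifun K i n α L = ∫ u in Ioi (L i), u ^ (-n) * shiftedWeight L α (L i) u := by
  rw [← setIntegral_Ioi_add_right]
  simp only [Ifun, shiftedWeight, add_sub_cancel_right]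

theorem measurable_shiftedWeight : Measurable (shiftedWeight L α a) := by
  unfold shiftedWeight; fun_prop

variable {L α a}

theorem shiftedWeight_le_one (hL : ∀ l, 0 ≤ L l) {u : ℝ} (hu : u ∈ Ioi a) :
    shiftedWeight L α a u ≤ 1 := by
  refine exp_le_one_iff.2 (neg_nonpos.2 (Finset.sum_nonneg fun l _ => rpow_nonneg ?_ _))
  linarith [hL l, mem_Ioi.1 hu]

theorem monotoneOn_shiftedWeight (hL : ∀ l, 0 ≤ L l) (hα : 0 < α) :
    MonotoneOn (shiftedWeight L α a) (Ioi a) := by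
  intro u hu v _ huv
  refine exp_le_exp.2 (neg_le_neg (Finset.sum_le_sum fun l _ => ?_))
  exact rpow_le_rpow_of_nonpos (by linarith [hL l, mem_Ioi.1 hu]) (by linarith) (by linarith)

theorem shiftedWeight_mul_exp (u : ℝ) :
    shiftedWeight L α a u * exp ((#{l | L l ≤ a} : ℝ) * u ^ (-α)) =
      exp (-∑ l, ((u - a + L l) ^ (-α) - if L l ≤ a then u ^ (-α) else 0)) := by
  rw [shiftedWeight, ← exp_add, Finset.sum_sub_distrib, ← Finset.sum_filter, Finset.sum_const,
    nsmul_eq_mul]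
  ring_nf

theorem shiftedWeight_le_exp (hL : ∀ l, 0 ≤ L l) (hα : 0 < α) {u : ℝ} (hu : u ∈ Ioi a) :
    shiftedWeight L α a u ≤ exp (-((#{l | L l ≤ a} : ℝ) * u ^ (-α))) := by
  set x := (#{l | L l ≤ a} : ℝ) * u ^ (-α)
  have hle : shiftedWeight L α a u * exp x ≤ 1 := by
    rw [shiftedWeight_mul_exp, exp_le_one_iff, neg_nonpos]
    exact Finset.sum_nonneg fun l _ => rpow_neg_sub_ite_nonneg hα.le (hL l) hu
  calc shiftedWeight L α a u = shiftedWeight L α a u * exp x * exp (-x) := by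
        rw [mul_assoc, ← exp_add, add_neg_cancel, exp_zero, mul_one]
    _ ≤ exp (-x) := mul_le_of_le_one_left (exp_pos _).le hle

theorem monotoneOn_shiftedWeight_mul_exp (hL : ∀ l, 0 ≤ L l) (hα : 0 < α) :
    MonotoneOn
      (fun u => shiftedWeight L α a u * exp ((#{l | L l ≤ a} : ℝ) * u ^ (-α)))
      (Ioi a) := by
  intro u hu v hv huv
  simp only [shiftedWeight_mul_exp]
  exact exp_le_exp.2 (neg_le_neg (Finset.sum_le_sum fun l _ =>
    antitoneOn_rpow_neg_sub_ite hα (hL l) hu hv huv))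

end ShiftedWeight

theorem stmt_7_general (K : ℕ) (α : ℝ) (hα : 0 < α)
    (L : Fin K → ℝ) (hL : ∀ l, 0 ≤ L l)
    (i : Fin K) (s : ℕ)
    (hs : s = (Finset.univ.filter (fun j : Fin K => L j ≤ L i)).card) :
    Ifun K i (α + 2) α L / Ifun K i (α + 1) α L ≤
      Real.Gamma (1 + 1/α) * (s : ℝ) ^ (-(1/α)) ∧
    (0 < L i →
      Ifun K i (α + 2) α L / Ifun K i (α + 1) α L ≤ α / ((α + 1) * L i)) := by
  subst hs
  have hs_pos : (0 : ℝ) < (#{j | L j ≤ L i} : ℝ) := by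
    exact_mod_cast Finset.card_pos.2 ⟨i, by simp⟩
  rw [Ifun_eq_setIntegral_Ioi, Ifun_eq_setIntegral_Ioi]
  refine ⟨?_, fun hi => ?_⟩
  · exact setIntegral_Ioi_rpow_mul_div_le_Gamma hα hs_pos (hL i) (measurable_shiftedWeight L α _)
      (fun _ _ => (exp_pos _).le) (fun _ hu => shiftedWeight_le_exp hL hα hu)
      (monotoneOn_shiftedWeight_mul_exp hL hα)
  · exact setIntegral_Ioi_rpow_mul_div_le hα hi (measurable_shiftedWeight L α _)
      (fun _ _ => (exp_pos _).le) (fun _ hu => shiftedWeight_le_one hL hu)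
      (monotoneOn_shiftedWeight hL hα)

/-- If `λ ∈ [0,∞)^K` has minimum `0` and `s` is the number of indices `j` with
`λ_j ≤ λ_i`, then `I_{i,α+2}(λ)/I_{i,α+1}(λ) ≤ Γ(1 + 1/α) s^(-1/α)`, and moreover
if `λ_i > 0` then it is also at most `α/((α+1) λ_i)`. -/
theorem stmt_7 (K : ℕ) (hK : 0 < K) (α : ℝ) (hα : 0 < α)
    (L : Fin K → ℝ) (hL : ∀ l, 0 ≤ L l) (hmin : ∃ l, L l = 0)
    (i : Fin K) (s : ℕ)
    (hs : s = (Finset.univ.filter (fun j : Fin K => L j ≤ L i)).card) :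
    Ifun K i (α + 2) α L / Ifun K i (α + 1) α L ≤
      Real.Gamma (1 + 1/α) * (s : ℝ) ^ (-(1/α)) ∧
    (0 < L i →
      Ifun K i (α + 2) α L / Ifun K i (α + 1) α L ≤ α / ((α + 1) * L i)) :=
  stmt_7_general K α hα L hL i s hs
end

section
/- For every real α > 1 and every positive integer i, one has Γ(1 + 1/α) · Γ(i + 1) / Γ(i + 1 + 1/α) ≤ 2 Γ(1 + 1/α) · i^{−1/α}; equivalently, B(1 + 1/α, i) / B(1, i) ≤ 2 Γ(1 + 1/α) i^{−1/α}. -/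
open Real

/- Log-convexity of `Γ` between `x + s` and `x + 1 + s`, with weights `s` and `1 - s`, bounds
`Γ(x + 1)`; the recurrence `Γ(x + 1 + s) = (x + s) Γ(x + s)` then eliminates `Γ(x + s)`. -/
theorem Real.Gamma_add_one_le_Gamma_add_one_add_mul_rpow_neg {x s : ℝ} (hxs : 0 < x + s)
    (hs : 0 < s) (hs1 : s < 1) :
    Gamma (x + 1) ≤ Gamma (x + 1 + s) * (x + s) ^ (-s) := by
  have hΓ : 0 < Gamma (x + s) := Gamma_pos_of_pos hxs
  have hrec : Gamma (x + 1 + s) = (x + s) * Gamma (x + s) := by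
    rw [add_right_comm, Gamma_add_one hxs.ne']
  calc Gamma (x + 1) = Gamma (s * (x + s) + (1 - s) * (x + 1 + s)) := by ring_nf
    _ ≤ Gamma (x + s) ^ s * Gamma (x + 1 + s) ^ (1 - s) :=
      Gamma_mul_add_mul_le_rpow_Gamma_mul_rpow_Gamma hxs (by linarith) hs (by linarith)
        (by ring)
    _ = Gamma (x + 1 + s) * (x + s) ^ (-s) := by
      rw [hrec, mul_rpow hxs.le hΓ.le, rpow_sub hxs, rpow_sub hΓ, rpow_neg hxs.le, rpow_one,
        rpow_one]
      field_simp

theorem Real.Gamma_add_one_div_Gamma_add_one_add_le_rpow_neg {x s : ℝ} (hx : 0 < x)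
    (hs : 0 < s) (hs1 : s < 1) :
    Gamma (x + 1) / Gamma (x + 1 + s) ≤ x ^ (-s) := by
  have hxs : 0 < x + s := by linarith
  rw [div_le_iff₀ (Gamma_pos_of_pos (by linarith)), mul_comm]
  calc Gamma (x + 1) ≤ Gamma (x + 1 + s) * (x + s) ^ (-s) :=
        Gamma_add_one_le_Gamma_add_one_add_mul_rpow_neg hxs hs hs1
    _ ≤ Gamma (x + 1 + s) * x ^ (-s) :=
      mul_le_mul_of_nonneg_left (rpow_le_rpow_of_nonpos hx (by linarith) (by linarith))
        (Gamma_pos_of_pos (by linarith)).le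

/-- For `α > 1` and a positive integer `i`,
`Γ(1 + 1/α) Γ(i + 1) / Γ(i + 1 + 1/α) ≤ 2 Γ(1 + 1/α) i^(-1/α)`,
i.e. `B(1 + 1/α, i)/B(1, i) ≤ 2 Γ(1 + 1/α) i^(-1/α)`. -/
theorem stmt_8 (α : ℝ) (hα : 1 < α) (i : ℕ) (hi : 0 < i) :
    Real.Gamma (1 + 1/α) * Real.Gamma ((i : ℝ) + 1) / Real.Gamma ((i : ℝ) + 1 + 1/α) ≤
      2 * Real.Gamma (1 + 1/α) * (i : ℝ) ^ (-(1/α)) := by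
  set s := 1 / α
  have hs : 0 < s := one_div_pos.2 (by linarith)
  have hs1 : s < 1 := (div_lt_one (by linarith)).2 hα
  have hi' : (0 : ℝ) < i := by exact_mod_cast hi
  have hΓ : 0 < Gamma (1 + s) := Gamma_pos_of_pos (by linarith)
  have hpow : 0 ≤ (i : ℝ) ^ (-s) := (rpow_pos_of_pos hi' _).le
  calc Gamma (1 + s) * Gamma (i + 1) / Gamma (i + 1 + s)
      = Gamma (1 + s) * (Gamma (i + 1) / Gamma (i + 1 + s)) := mul_div_assoc _ _ _
    _ ≤ Gamma (1 + s) * (i : ℝ) ^ (-s) := by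
      gcongr
      exact Gamma_add_one_div_Gamma_add_one_add_le_rpow_neg hi' hs hs1
    _ ≤ 2 * Gamma (1 + s) * (i : ℝ) ^ (-s) := by linarith [mul_nonneg hΓ.le hpow]
end

section
/- Fix a real α > 1, a positive integer K, and μ ∈ [0, ∞)^K, and define k(z) = Σ_{i=1}^K (z + μ_i)^{−α} for z > 0. Then α ∫₀^∞ k(z) e^{−k(z)} dz ≤ (α e^{−1} + γ(1 − 1/α, 1)) · K^{1/α}. -/
open Real Set MeasureTheory

/-! With `φ x = x * exp (-x)`, which is bounded by `e⁻¹` and increasing on `(-∞, 1]`, the bound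
`k z ≤ K z^(-α)` gives `φ (k z) ≤ φ (min (K z^(-α)) 1)`. After the rescaling `z = K^(1/α) x` this
majorant is `e⁻¹` on `(0, 1]`, and on `(1, ∞)` the substitution `t = x^(-α)` turns
`α ∫ φ (x^(-α)) dx` into `γ(1 - 1/α, 1)`. -/

lemma monotoneOn_mul_exp_neg : MonotoneOn (fun x : ℝ => x * exp (-x)) (Iic 1) := by
  intro a _ b hb hab
  have key : a ≤ b * exp (a - b) := by
    rcases le_or_gt 0 b with h0 | h0
    · nlinarith [add_one_le_exp (a - b), mem_Iic.mp hb]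
    · nlinarith [exp_le_one_iff.mpr (sub_nonpos.mpr hab)]
  calc a * exp (-a) ≤ b * exp (a - b) * exp (-a) := by gcongr
    _ = b * exp (-b) := by rw [mul_assoc, ← exp_add]; ring_nf

lemma mul_exp_neg_le_min_one {x y : ℝ} (hxy : x ≤ y) :
    x * exp (-x) ≤ min y 1 * exp (-min y 1) := by
  rcases le_total y 1 with hy | hy
  · rw [min_eq_left hy]
    exact monotoneOn_mul_exp_neg (hxy.trans hy) hy hxy
  · rw [min_eq_right hy, one_mul]
    exact mul_exp_neg_le_exp_neg_one x

lemma mul_integral_Ioi_one_rpow_neg_mul_exp {α : ℝ} (hα : 0 < α) :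
    α * ∫ x in Ioi 1, x ^ (-α) * exp (-x ^ (-α)) =
      ∫ t in (0:ℝ)..1, t ^ ((1 - 1/α) - 1) * exp (-t) := by
  have hsubst := integral_comp_rpow_Ioi
    ((Ioo 0 1).indicator fun t => t ^ ((1 - 1/α) - 1) * exp (-t)) (neg_ne_zero.mpr hα.ne')
  rw [setIntegral_indicator measurableSet_Ioo, inter_eq_right.mpr Ioo_subset_Ioi_self,
    ← integral_Ioc_eq_integral_Ioo, ← intervalIntegral.integral_of_le zero_le_one] at hsubst
  rw [← hsubst, ← integral_const_mul, ← inter_eq_right.mpr (Ioi_subset_Ioi zero_le_one),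
    ← setIntegral_indicator measurableSet_Ioi]
  refine setIntegral_congr_fun measurableSet_Ioi fun x (hx : 0 < x) => ?_
  by_cases h1 : 1 < x
  · have hmem : x ^ (-α) ∈ Ioo (0:ℝ) 1 :=
      ⟨rpow_pos_of_pos hx _, rpow_lt_one_of_one_lt_of_neg h1 (neg_lt_zero.mpr hα)⟩
    have hpow : (x ^ (-α)) ^ ((1 - 1/α) - 1) = x := by
      rw [← rpow_mul hx.le, show -α * ((1 - 1/α) - 1) = 1 by field_simp; ring, rpow_one]
    have hpow' : x ^ (-α - 1) * x = x ^ (-α) := by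
      rw [rpow_sub_one hx.ne', div_mul_cancel₀ _ hx.ne']
    rw [indicator_of_mem (show x ∈ Ioi 1 from h1), indicator_of_mem hmem, smul_eq_mul, hpow,
      abs_neg, abs_of_pos hα, ← hpow']
    ring
  · have hmem : x ^ (-α) ∉ Ioo (0:ℝ) 1 := fun hm => (not_lt.mpr
      (one_le_rpow_of_pos_of_le_one_of_nonpos hx (not_lt.mp h1) (neg_nonpos.mpr hα.le))) hm.2
    rw [indicator_of_notMem (show x ∉ Ioi 1 from h1), indicator_of_notMem hmem, smul_zero]

lemma integrableOn_Ioi_one_rpow_neg_mul_exp {α : ℝ} (hα : 1 < α) :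
    IntegrableOn (fun x => x ^ (-α) * exp (-x ^ (-α))) (Ioi 1) := by
  refine (integrableOn_Ioi_rpow_of_lt (neg_lt_neg hα) zero_lt_one).mono'
    (by fun_prop : Measurable fun x : ℝ => x ^ (-α) * exp (-x ^ (-α))).aestronglyMeasurable ?_
  refine (ae_restrict_iff' measurableSet_Ioi).mpr (.of_forall fun x (hx : 1 < x) => ?_)
  have hpos : 0 ≤ x ^ (-α) := rpow_nonneg (zero_le_one.trans hx.le) _
  rw [norm_of_nonneg (by positivity)]
  exact mul_le_of_le_one_right hpos (exp_le_one_iff.mpr (neg_nonpos.mpr hpos))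

lemma min_rpow_neg_one_eqOn_Ioc {α : ℝ} (hα : 0 < α) :
    EqOn (fun x : ℝ => min (x ^ (-α)) 1 * exp (-min (x ^ (-α)) 1)) (fun _ => exp (-1))
      (Ioc 0 1) := fun x hx => by
  simp only [min_eq_right (one_le_rpow_of_pos_of_le_one_of_nonpos hx.1 hx.2
    (neg_nonpos.mpr hα.le)), one_mul]

lemma min_rpow_neg_one_eqOn_Ioi {α : ℝ} (hα : 0 < α) :
    EqOn (fun x : ℝ => min (x ^ (-α)) 1 * exp (-min (x ^ (-α)) 1))
      (fun x => x ^ (-α) * exp (-x ^ (-α))) (Ioi 1) := fun x (hx : 1 < x) => by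
  simp only [min_eq_left (rpow_lt_one_of_one_lt_of_neg hx (neg_lt_zero.mpr hα)).le]

lemma integrableOn_min_rpow_neg_one_mul_exp {α : ℝ} (hα : 1 < α) :
    IntegrableOn (fun x : ℝ => min (x ^ (-α)) 1 * exp (-min (x ^ (-α)) 1)) (Ioi 0) := by
  rw [← Ioc_union_Ioi_eq_Ioi zero_le_one]
  exact .union
    ((integrableOn_congr_fun (min_rpow_neg_one_eqOn_Ioc (by linarith)) measurableSet_Ioc).mpr
      (integrableOn_const measure_Ioc_lt_top.ne))
    ((integrableOn_congr_fun (min_rpow_neg_one_eqOn_Ioi (by linarith)) measurableSet_Ioi).mpr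
      (integrableOn_Ioi_one_rpow_neg_mul_exp hα))

lemma mul_integral_min_rpow_neg_one_mul_exp {α : ℝ} (hα : 1 < α) :
    α * ∫ x in Ioi 0, min (x ^ (-α)) 1 * exp (-min (x ^ (-α)) 1) =
      α * exp (-1) + ∫ t in (0:ℝ)..1, t ^ ((1 - 1/α) - 1) * exp (-t) := by
  have hint := integrableOn_min_rpow_neg_one_mul_exp hα
  rw [← Ioc_union_Ioi_eq_Ioi zero_le_one] at hint ⊢
  rw [setIntegral_union (Ioc_disjoint_Ioi le_rfl) measurableSet_Ioi
      (hint.mono_set subset_union_left) (hint.mono_set subset_union_right),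
    setIntegral_congr_fun measurableSet_Ioc (min_rpow_neg_one_eqOn_Ioc (by linarith)),
    setIntegral_congr_fun measurableSet_Ioi (min_rpow_neg_one_eqOn_Ioi (by linarith)),
    mul_add, mul_integral_Ioi_one_rpow_neg_mul_exp (by linarith), setIntegral_const]
  simp

theorem mul_integral_mul_exp_neg_le_of_le_rpow_neg {α : ℝ} (hα : 1 < α) {h : ℝ → ℝ}
    (hh : ∀ x ∈ Ioi 0, h x ≤ x ^ (-α)) :
    α * ∫ x in Ioi 0, h x * exp (-h x) ≤
      α * exp (-1) + ∫ t in (0:ℝ)..1, t ^ ((1 - 1/α) - 1) * exp (-t) := by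
  rw [← mul_integral_min_rpow_neg_one_mul_exp hα]
  refine mul_le_mul_of_nonneg_left ?_ (by linarith)
  by_cases hint : IntegrableOn (fun x => h x * exp (-h x)) (Ioi 0)
  · exact setIntegral_mono_on hint (integrableOn_min_rpow_neg_one_mul_exp hα) measurableSet_Ioi
      fun x hx => mul_exp_neg_le_min_one (hh x hx)
  · rw [integral_undef hint]
    exact setIntegral_nonneg measurableSet_Ioi fun x hx =>
      mul_nonneg (le_min (rpow_nonneg (le_of_lt hx) _) zero_le_one) (exp_pos _).le

theorem mul_integral_mul_exp_neg_le_of_le_const_mul_rpow_neg {α C : ℝ} (hα : 1 < α) (hC : 0 < C)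
    {f : ℝ → ℝ} (hf : ∀ z ∈ Ioi 0, f z ≤ C * z ^ (-α)) :
    α * ∫ z in Ioi 0, f z * exp (-f z) ≤
      (α * exp (-1) + ∫ t in (0:ℝ)..1, t ^ ((1 - 1/α) - 1) * exp (-t)) * C ^ (1/α) := by
  set c := C ^ (1/α)
  have hc : 0 < c := rpow_pos_of_pos hC _
  have hcα : C * c ^ (-α) = 1 := by
    rw [← rpow_mul hC.le, one_div, inv_mul_eq_div, neg_div_self (by linarith), rpow_neg_one,
      mul_inv_cancel₀ hC.ne']
  have hscale := integral_comp_mul_left_Ioi' (fun z => f z * exp (-f z)) 0 hc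
  rw [mul_zero, smul_eq_mul] at hscale
  have hbound := mul_integral_mul_exp_neg_le_of_le_rpow_neg hα (h := fun x => f (c * x))
    fun x (hx : 0 < x) => by
      simpa [mul_rpow hc.le hx.le, ← mul_assoc, hcα] using hf (c * x) (mul_pos hc hx)
  rw [← hscale, mul_left_comm, mul_comm _ c]
  exact mul_le_mul_of_nonneg_left hbound hc.le

lemma sum_rpow_neg_le {ι : Type*} (s : Finset ι) {α z : ℝ} (hα : 0 ≤ α) (hz : 0 < z)
    {μ : ι → ℝ} (hμ : ∀ i, 0 ≤ μ i) :
    ∑ i ∈ s, (z + μ i) ^ (-α) ≤ s.card * z ^ (-α) := by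
  rw [← nsmul_eq_mul, ← Finset.sum_const]
  exact Finset.sum_le_sum fun i _ =>
    rpow_le_rpow_of_nonpos hz (le_add_of_nonneg_right (hμ i)) (neg_nonpos.mpr hα)

/-- For `α > 1`, a positive integer `K`, and `μ ∈ [0,∞)^K`, with
`k(z) = Σ_i (z + μ_i)^(-α)`, one has
`α ∫₀^∞ k(z) e^(-k(z)) dz ≤ (α e⁻¹ + γ(1 - 1/α, 1)) K^(1/α)`. -/
theorem stmt_12 (α : ℝ) (hα : 1 < α) (K : ℕ) (hK : 0 < K)
    (μ : Fin K → ℝ) (hμ : ∀ i, 0 ≤ μ i) :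
    α * ∫ z in Set.Ioi (0:ℝ),
        (∑ i : Fin K, (z + μ i) ^ (-α)) *
          Real.exp (-(∑ i : Fin K, (z + μ i) ^ (-α))) ≤
      (α * Real.exp (-1) +
        ∫ t in (0:ℝ)..1, t ^ ((1 - 1/α) - 1) * Real.exp (-t)) * (K : ℝ) ^ (1/α) :=
  mul_integral_mul_exp_neg_le_of_le_const_mul_rpow_neg hα (Nat.cast_pos.mpr hK)
    fun z hz => by
      simpa using sum_rpow_neg_le Finset.univ (by linarith) hz hμ
end

section
/- Fix a real α > 1, an integer K ≥ 2, a vector μ ∈ [0, ∞)^K with μ₁ = 0, μ_i > 0 for all i ≥ 2, and Σ_{i=2}^K μ_i^{−α} ≤ 1, and nonnegative reals Δ₂, …, Δ_K. Then for every real b > 0, α ∫₀^∞ (Σ_{i=2}^K Δ_i (z + μ_i)^{−(α+1)}) · exp(−Σ_{j=1}^K (z + μ_j)^{−α}) dz ≥ (e^{−(1 + b^{−α})} / (1 + b)^α) · Σ_{i=2}^K Δ_i μ_i^{−α}. -/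
open Real MeasureTheory Set

/-!
Only the range `z > b` is kept. There `z^{-α} < b^{-α}` and `(z + μ_i)^{-α} ≤ μ_i^{-α}`, so
the exponential factor is at least `e^{-(1 + b^{-α})}`, while
`α ∫_b^∞ (z + μ_i)^{-(α+1)} dz = (b + μ_i)^{-α}`. Finally `Σ μ_i^{-α} ≤ 1` forces `μ_i ≥ 1`,
whence `b + μ_i ≤ (1 + b) μ_i`.
-/

lemma integrableOn_Ioi_add_rpow_of_lt {p m c : ℝ} (hp : p < -1) (hcm : 0 < c + m) :
    IntegrableOn (fun z : ℝ => (z + m) ^ p) (Ioi c) := by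
  have h := integrableOn_Ioi_rpow_of_lt hp hcm
  rw [← (measurePreserving_add_right volume m).map_eq,
    (measurableEmbedding_addRight m).integrableOn_map_iff,
    preimage_add_const_Ioi, add_sub_cancel_right] at h
  exact h

lemma integral_Ioi_add_rpow_of_lt {p m c : ℝ} (hp : p < -1) (hcm : 0 < c + m) :
    ∫ z in Ioi c, (z + m) ^ p = -(c + m) ^ (p + 1) / (p + 1) := by
  have h := (measurePreserving_add_right volume m).setIntegral_preimage_emb
    (measurableEmbedding_addRight m) (fun t : ℝ => t ^ p) (Ioi (c + m))
  rw [preimage_add_const_Ioi, add_sub_cancel_right] at h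
  rw [h, integral_Ioi_rpow_of_lt hp hcm]

section WeightedSum

variable {ι : Type*} {s : Finset ι} {α c : ℝ} {μ Δ : ι → ℝ}

lemma integrableOn_Ioi_sum_add_rpow (hα : 0 < α) (hcμ : ∀ i ∈ s, 0 < c + μ i) :
    IntegrableOn (fun z => ∑ i ∈ s, Δ i * (z + μ i) ^ (-(α + 1))) (Ioi c) :=
  integrable_finsetSum _ fun i hi =>
    (integrableOn_Ioi_add_rpow_of_lt (by linarith) (hcμ i hi)).const_mul (Δ i)

lemma mul_integral_Ioi_sum_add_rpow (hα : 0 < α) (hcμ : ∀ i ∈ s, 0 < c + μ i) :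
    α * ∫ z in Ioi c, ∑ i ∈ s, Δ i * (z + μ i) ^ (-(α + 1)) =
      ∑ i ∈ s, Δ i * (c + μ i) ^ (-α) := by
  rw [integral_finsetSum _ fun i hi =>
      (integrableOn_Ioi_add_rpow_of_lt (by linarith) (hcμ i hi)).const_mul (Δ i),
    Finset.mul_sum]
  refine Finset.sum_congr rfl fun i hi => ?_
  rw [integral_const_mul, integral_Ioi_add_rpow_of_lt (by linarith) (hcμ i hi),
    show -(α + 1) + 1 = -α by ring]
  field_simp

lemma one_le_of_sum_rpow_neg_le_one (hα : 0 < α) (hμ : ∀ i ∈ s, 0 < μ i)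
    (hsum : ∑ i ∈ s, μ i ^ (-α) ≤ 1) {i : ι} (hi : i ∈ s) : 1 ≤ μ i := by
  have hle : μ i ^ (-α) ≤ 1 :=
    (Finset.single_le_sum (fun j hj => (rpow_pos_of_pos (hμ j hj) _).le) hi).trans hsum
  rcases (rpow_le_one_iff_of_pos (hμ i hi)).1 hle with h | h
  · exact h.1
  · linarith [h.2]

end WeightedSum

lemma rpow_neg_div_rpow_le_add_rpow_neg {m b α : ℝ} (hm : 1 ≤ m) (hb : 0 ≤ b) (hα : 0 ≤ α) :
    m ^ (-α) / (1 + b) ^ α ≤ (b + m) ^ (-α) := by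
  have h1b : 0 < 1 + b := by linarith
  calc m ^ (-α) / (1 + b) ^ α = ((1 + b) * m) ^ (-α) := by
        rw [mul_rpow h1b.le (by linarith), rpow_neg h1b.le]; ring
    _ ≤ (b + m) ^ (-α) := rpow_le_rpow_of_nonpos (by linarith) (by nlinarith) (by linarith)

lemma const_mul_setIntegral_Ioi_le {f g : ℝ → ℝ} {a b C : ℝ} (hab : a ≤ b)
    (hf : IntegrableOn f (Ioi a)) (hf0 : ∀ z ∈ Ioi a, 0 ≤ f z) (hg : Measurable g)
    (hg01 : ∀ z ∈ Ioi a, g z ∈ Icc 0 1) (hCg : ∀ z ∈ Ioi b, C ≤ g z) :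
    C * ∫ z in Ioi b, f z ≤ ∫ z in Ioi a, f z * g z := by
  have hsub : Ioi b ⊆ Ioi a := Ioi_subset_Ioi hab
  have hfg : IntegrableOn (fun z => f z * g z) (Ioi a) := by
    refine hf.mul_bdd hg.aestronglyMeasurable (c := 1) ?_
    filter_upwards [ae_restrict_mem measurableSet_Ioi] with z hz
    rw [norm_of_nonneg (hg01 z hz).1]
    exact (hg01 z hz).2
  rw [← integral_const_mul]
  calc ∫ z in Ioi b, C * f z ≤ ∫ z in Ioi b, f z * g z :=
        setIntegral_mono_on ((hf.mono_set hsub).const_mul C) (hfg.mono_set hsub)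
          measurableSet_Ioi fun z hz => by
            rw [mul_comm]; exact mul_le_mul_of_nonneg_left (hCg z hz) (hf0 z (hsub hz))
    _ ≤ ∫ z in Ioi a, f z * g z := by
        refine setIntegral_mono_set hfg ?_ hsub.eventuallyLE
        filter_upwards [ae_restrict_mem measurableSet_Ioi] with z hz
        exact mul_nonneg (hf0 z hz) (hg01 z hz).1

section ExponentialFactor

variable {K : ℕ} {μ : ℕ → ℝ} (hμ1 : μ 1 = 0) (hμpos : ∀ i ∈ Finset.Icc 2 K, 0 < μ i)
include hμ1 hμpos

lemma nonneg_of_mem_Icc_one {j : ℕ} (hj : j ∈ Finset.Icc 1 K) : 0 ≤ μ j := by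
  rcases eq_or_ne j 1 with rfl | hj1
  · exact hμ1.ge
  · refine (hμpos j ?_).le
    simp only [Finset.mem_Icc] at hj ⊢
    omega

lemma exp_neg_sum_Icc_one_mem_Icc {α z : ℝ} (hz : 0 < z) :
    exp (-∑ j ∈ Finset.Icc 1 K, (z + μ j) ^ (-α)) ∈ Icc 0 1 := by
  refine ⟨(exp_pos _).le, exp_le_one_iff.2 (neg_nonpos.2 (Finset.sum_nonneg fun j hj => ?_))⟩
  exact rpow_nonneg (by linarith [nonneg_of_mem_Icc_one hμ1 hμpos hj]) _

lemma exp_neg_one_add_rpow_neg_le {α b z : ℝ} (hα : 0 ≤ α)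
    (hμsum : ∑ i ∈ Finset.Icc 2 K, μ i ^ (-α) ≤ 1) (hb : 0 < b) (hbz : b < z) :
    exp (-(1 + b ^ (-α))) ≤ exp (-∑ j ∈ Finset.Icc 1 K, (z + μ j) ^ (-α)) := by
  have hz : 0 < z := hb.trans hbz
  have hsub : Finset.Icc 1 K ⊆ insert 1 (Finset.Icc 2 K) := by
    intro j hj
    simp only [Finset.mem_Icc, Finset.mem_insert] at hj ⊢
    omega
  have hnonneg : ∀ j ∈ insert 1 (Finset.Icc 2 K), 0 ≤ (z + μ j) ^ (-α) := by
    intro j hj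
    rcases Finset.mem_insert.1 hj with rfl | hj
    · exact rpow_nonneg (by linarith) _
    · exact rpow_nonneg (by linarith [hμpos j hj]) _
  have hrest : ∑ j ∈ Finset.Icc 2 K, (z + μ j) ^ (-α) ≤ ∑ j ∈ Finset.Icc 2 K, μ j ^ (-α) :=
    Finset.sum_le_sum fun j hj =>
      rpow_le_rpow_of_nonpos (hμpos j hj) (by linarith) (by linarith)
  have hfirst : z ^ (-α) ≤ b ^ (-α) := rpow_le_rpow_of_nonpos hb hbz.le (by linarith)
  refine exp_le_exp.2 (neg_le_neg ?_)
  calc ∑ j ∈ Finset.Icc 1 K, (z + μ j) ^ (-α)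
      ≤ ∑ j ∈ insert 1 (Finset.Icc 2 K), (z + μ j) ^ (-α) :=
        Finset.sum_le_sum_of_subset_of_nonneg hsub fun j hj _ => hnonneg j hj
    _ = z ^ (-α) + ∑ j ∈ Finset.Icc 2 K, (z + μ j) ^ (-α) := by
        rw [Finset.sum_insert (by simp), hμ1, add_zero]
    _ ≤ 1 + b ^ (-α) := by linarith

end ExponentialFactor

theorem stmt_13_general (α : ℝ) (hα : 1 < α) (K : ℕ)
    (μ : ℕ → ℝ) (hμ1 : μ 1 = 0) (hμpos : ∀ i ∈ Finset.Icc 2 K, 0 < μ i)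
    (hμsum : ∑ i ∈ Finset.Icc 2 K, (μ i) ^ (-α) ≤ 1)
    (Δ : ℕ → ℝ) (hΔ : ∀ i ∈ Finset.Icc 2 K, 0 ≤ Δ i)
    (b : ℝ) (hb : 0 < b) :
    Real.exp (-(1 + b ^ (-α))) / (1 + b) ^ α *
        ∑ i ∈ Finset.Icc 2 K, Δ i * (μ i) ^ (-α) ≤
      α * ∫ z in Set.Ioi (0:ℝ),
        (∑ i ∈ Finset.Icc 2 K, Δ i * (z + μ i) ^ (-(α + 1))) *
          Real.exp (-(∑ j ∈ Finset.Icc 1 K, (z + μ j) ^ (-α))) := by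
  have hα0 : 0 < α := by linarith
  have hμb : ∀ i ∈ Finset.Icc 2 K, 0 < b + μ i := fun i hi => by linarith [hμpos i hi]
  set C := exp (-(1 + b ^ (-α)))
  calc C / (1 + b) ^ α * ∑ i ∈ Finset.Icc 2 K, Δ i * μ i ^ (-α)
      = C * ∑ i ∈ Finset.Icc 2 K, Δ i * (μ i ^ (-α) / (1 + b) ^ α) := by
        rw [Finset.mul_sum, Finset.mul_sum]
        exact Finset.sum_congr rfl fun i _ => by ring
    _ ≤ C * ∑ i ∈ Finset.Icc 2 K, Δ i * (b + μ i) ^ (-α) := by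
        gcongr with i hi
        · exact hΔ i hi
        · exact rpow_neg_div_rpow_le_add_rpow_neg
            (one_le_of_sum_rpow_neg_le_one hα0 hμpos hμsum hi) hb.le hα0.le
    _ = α * (C * ∫ z in Ioi b, ∑ i ∈ Finset.Icc 2 K, Δ i * (z + μ i) ^ (-(α + 1))) := by
        rw [mul_left_comm, mul_integral_Ioi_sum_add_rpow hα0 hμb]
    _ ≤ _ := by
        gcongr
        refine const_mul_setIntegral_Ioi_le hb.le
          (integrableOn_Ioi_sum_add_rpow hα0 fun i hi => by linarith [hμpos i hi])
          (fun z hz => Finset.sum_nonneg fun i hi => mul_nonneg (hΔ i hi)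
            (rpow_nonneg (by linarith [hμpos i hi, mem_Ioi.1 hz]) _))
          (by fun_prop) (fun z hz => exp_neg_sum_Icc_one_mem_Icc hμ1 hμpos hz)
          (fun z hz => exp_neg_one_add_rpow_neg_le hμ1 hμpos hα0.le hμsum hb hz)

/-- Regret lower bound term (case on event `F_t`): for `α > 1`, `K ≥ 2`,
`μ` with `μ₁ = 0`, `μ_i > 0` for `2 ≤ i ≤ K`, `Σ_{i=2}^K μ_i^(-α) ≤ 1`,
nonnegative `Δ_i`, and any `b > 0`,
`α ∫₀^∞ (Σ_{i=2}^K Δ_i (z+μ_i)^(-(α+1))) exp(-Σ_{j=1}^K (z+μ_j)^(-α)) dz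
  ≥ (e^(-(1+b^(-α)))/(1+b)^α) Σ_{i=2}^K Δ_i μ_i^(-α)`. -/
theorem stmt_13 (α : ℝ) (hα : 1 < α) (K : ℕ) (hK : 2 ≤ K)
    (μ : ℕ → ℝ) (hμ1 : μ 1 = 0) (hμpos : ∀ i ∈ Finset.Icc 2 K, 0 < μ i)
    (hμsum : ∑ i ∈ Finset.Icc 2 K, (μ i) ^ (-α) ≤ 1)
    (Δ : ℕ → ℝ) (hΔ : ∀ i ∈ Finset.Icc 2 K, 0 ≤ Δ i)
    (b : ℝ) (hb : 0 < b) :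
    Real.exp (-(1 + b ^ (-α))) / (1 + b) ^ α *
        ∑ i ∈ Finset.Icc 2 K, Δ i * (μ i) ^ (-α) ≤
      α * ∫ z in Set.Ioi (0:ℝ),
        (∑ i ∈ Finset.Icc 2 K, Δ i * (z + μ i) ^ (-(α + 1))) *
          Real.exp (-(∑ j ∈ Finset.Icc 1 K, (z + μ j) ^ (-α))) :=
  stmt_13_general α hα K μ hμ1 hμpos hμsum Δ hΔ b hb
end

section
/- Fix a real α > 1, an integer K ≥ 2, and a vector μ ∈ [0, ∞)^K with μ₁ = 0, μ_i > 0 for all i ≥ 2, and Σ_{i=2}^K μ_i^{−α} ≤ 1. Then ∫₀^∞ α z^{−(α+1)} · exp(−Σ_{j=1}^K (z + μ_j)^{−α}) dz ≥ 1/e. -/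
/-!
The integrand without the terms `j ≥ 2` is the Fréchet density `α z^{-(α+1)} exp(-z^{-α})`,
whose integral is `1` by the substitution `y = z^{-α}`. Since `μ_j > 0`, each remaining term
`(z + μ_j)^{-α}` is at most `μ_j^{-α}`, so together they cost at most a factor `e^{-1}`.
-/

open Real MeasureTheory Set

section FrechetDensity

variable {α : ℝ}

lemma frechet_density_eq_comp_rpow (hα : 0 < α) (z : ℝ) :
    α * z ^ (-(α + 1)) * exp (-(z ^ (-α))) =
      (|-α| * z ^ (-α - 1)) • (fun y : ℝ => exp (-y)) (z ^ (-α)) := by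
  rw [abs_neg, abs_of_pos hα, smul_eq_mul, neg_add']

lemma integrableOn_frechet_density (hα : 0 < α) :
    IntegrableOn (fun z : ℝ => α * z ^ (-(α + 1)) * exp (-(z ^ (-α)))) (Ioi 0) := by
  simp_rw [frechet_density_eq_comp_rpow hα]
  exact (integrableOn_Ioi_comp_rpow_iff _ (neg_ne_zero.mpr hα.ne')).mpr
    (integrableOn_exp_neg_Ioi 0)

lemma integral_frechet_density (hα : 0 < α) :
    ∫ z in Ioi 0, α * z ^ (-(α + 1)) * exp (-(z ^ (-α))) = 1 := by
  simp_rw [frechet_density_eq_comp_rpow hα]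
  exact (integral_comp_rpow_Ioi _ (neg_ne_zero.mpr hα.ne')).trans integral_exp_neg_Ioi_zero

lemma exp_neg_one_le_integral_frechet_density_mul_exp_neg (hα : 0 < α) {S : ℝ → ℝ}
    (hS : Measurable S) (hS₀ : ∀ z ∈ Ioi (0 : ℝ), 0 ≤ S z) (hS₁ : ∀ z ∈ Ioi (0 : ℝ), S z ≤ 1) :
    exp (-1) ≤ ∫ z in Ioi 0, α * z ^ (-(α + 1)) * exp (-(z ^ (-α) + S z)) := by
  have hφ := integrableOn_frechet_density hα
  have hweight : ∀ z ∈ Ioi (0 : ℝ), 0 ≤ α * z ^ (-(α + 1)) := fun z hz =>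
    mul_nonneg hα.le (rpow_nonneg (le_of_lt hz) _)
  have hint : IntegrableOn (fun z => α * z ^ (-(α + 1)) * exp (-(z ^ (-α) + S z))) (Ioi 0) := by
    refine hφ.mono' (by fun_prop) ?_
    filter_upwards [ae_restrict_mem measurableSet_Ioi] with z hz
    rw [norm_of_nonneg (mul_nonneg (hweight z hz) (exp_nonneg _))]
    gcongr
    · exact hweight z hz
    · linarith [hS₀ z hz]
  calc exp (-1) = ∫ z in Ioi 0, exp (-1) * (α * z ^ (-(α + 1)) * exp (-(z ^ (-α)))) := by
        rw [integral_const_mul, integral_frechet_density hα, mul_one]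
    _ ≤ ∫ z in Ioi 0, α * z ^ (-(α + 1)) * exp (-(z ^ (-α) + S z)) := by
        refine setIntegral_mono_on (hφ.const_mul _) hint measurableSet_Ioi fun z hz => ?_
        rw [mul_left_comm, ← exp_add]
        gcongr
        · exact hweight z hz
        · linarith [hS₁ z hz]

end FrechetDensity

lemma sum_rpow_neg_add_le_sum_rpow_neg {ι : Type*} (s : Finset ι) {μ : ι → ℝ}
    (hμ : ∀ i ∈ s, 0 < μ i) {α : ℝ} (hα : 0 ≤ α) {z : ℝ} (hz : 0 ≤ z) :
    ∑ i ∈ s, (z + μ i) ^ (-α) ≤ ∑ i ∈ s, μ i ^ (-α) :=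
  Finset.sum_le_sum fun i hi =>
    rpow_le_rpow_of_nonpos (hμ i hi) (le_add_of_nonneg_left hz) (neg_nonpos.mpr hα)

/-- Probability of the optimal arm on the event `F_t`: for `α > 1`, `K ≥ 2`,
`μ₁ = 0`, `μ_i > 0` for `2 ≤ i ≤ K`, and `Σ_{i=2}^K μ_i^(-α) ≤ 1`,
`∫₀^∞ α z^(-(α+1)) exp(-Σ_{j=1}^K (z+μ_j)^(-α)) dz ≥ 1/e`. -/
theorem stmt_14 (α : ℝ) (hα : 1 < α) (K : ℕ) (hK : 2 ≤ K)
    (μ : ℕ → ℝ) (hμ1 : μ 1 = 0) (hμpos : ∀ i ∈ Finset.Icc 2 K, 0 < μ i)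
    (hμsum : ∑ i ∈ Finset.Icc 2 K, (μ i) ^ (-α) ≤ 1) :
    1 / Real.exp 1 ≤
      ∫ z in Set.Ioi (0:ℝ), α * z ^ (-(α + 1)) *
        Real.exp (-(∑ j ∈ Finset.Icc 1 K, (z + μ j) ^ (-α))) := by
  have hα₀ : 0 < α := zero_lt_one.trans hα
  have hsplit : ∀ z : ℝ, ∑ j ∈ Finset.Icc 1 K, (z + μ j) ^ (-α) =
      z ^ (-α) + ∑ j ∈ Finset.Icc 2 K, (z + μ j) ^ (-α) := fun z => by
    rw [← Finset.insert_Icc_add_one_left_eq_Icc (by omega : 1 ≤ K),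
      Finset.sum_insert (by simp), hμ1, add_zero]
    rfl
  simp_rw [hsplit, one_div, ← exp_neg]
  refine exp_neg_one_le_integral_frechet_density_mul_exp_neg hα₀ (by fun_prop)
    (fun z hz => Finset.sum_nonneg fun i hi => rpow_nonneg ?_ _) (fun z hz => ?_)
  · linarith [hμpos i hi, mem_Ioi.mp hz]
  · exact (sum_rpow_neg_add_le_sum_rpow_neg _ hμpos hα₀.le (le_of_lt hz)).trans hμsum
end

section
/- Fix a real α > 1, an integer K ≥ 2, a vector μ ∈ [0, ∞)^K with μ₁ = 0, μ_i > 0 for all i ≥ 2, and Σ_{i=2}^K μ_i^{−α} ≥ 1, and nonnegative reals Δ₂, …, Δ_K with Δ = min_{2 ≤ i ≤ K} Δ_i. Then α ∫₀^∞ (Σ_{i=2}^K Δ_i (z + μ_i)^{−(α+1)}) · exp(−Σ_{j=1}^K (z + μ_j)^{−α}) dz ≥ Δ / (2^{α+1} + 1). -/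
/-!
Write `S(z) = z^{-α} + T(z)` with `T(z) = ∑_{i ≥ 2} (z + μ_i)^{-α}` and `t = -T'`. Since every
`Δ_i ≥ Δm`, `α` times the integrand is at least `Δm · t · e^{-S}`. As `e^{-S}` increases from `0`
to `1` on `(0, ∞)`, `∫ (α z^{-α-1} + t) e^{-S} = 1`, so `∫ t e^{-S} = 1 - ∫ α z^{-α-1} e^{-S}`.

From `(z + μ)^{-α} ≥ 2^{-α} min(z^{-α}, μ^{-α})` and `∑ μ_i^{-α} ≥ 1` one gets
`T(z) ≥ c · min(1, z^{-α})` with `c = 2^{-α}`. The substitution `u = z^{-α}` then bounds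
`∫ α z^{-α-1} e^{-S}` by `∫₀^∞ e^{-u - c min(1, u)} du = (1 + c e^{-(1+c)}) / (1 + c)`, and
`e^{1+c} ≥ 2 + c` turns this into `∫ t e^{-S} ≥ c / (2 + c) = 1 / (2^{α+1} + 1)`.
-/

open Real MeasureTheory Set Filter Topology

theorem integrableOn_Ioi_and_integral_Ioi_of_hasDerivAt_of_nonneg_of_tendsto {F f : ℝ → ℝ}
    {a m l : ℝ} (hF : ∀ x ∈ Ioi a, HasDerivAt F (f x) x) (hf : ∀ x ∈ Ioi a, 0 ≤ f x)
    (ha : Tendsto F (𝓝[>] a) (𝓝 m)) (htop : Tendsto F atTop (𝓝 l)) :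
    IntegrableOn f (Ioi a) ∧ ∫ x in Ioi a, f x = l - m := by
  classical
  rw [← Ici_sdiff_left] at ha
  set G := Function.update F a m
  have hcont : ContinuousWithinAt G (Ici a) a := continuousWithinAt_update_same.mpr ha
  have hG : ∀ x ∈ Ioi a, HasDerivAt G (f x) x := fun x hx =>
    (hF x hx).congr_of_eventuallyEq <| by
      filter_upwards [eventually_ne_nhds (ne_of_gt hx)] with y hy using
        Function.update_of_ne hy m F
  have hGtop : Tendsto G atTop (𝓝 l) := htop.congr' <| by
    filter_upwards [eventually_ne_atTop a] with x hx using (Function.update_of_ne hx m F).symm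
  refine ⟨integrableOn_Ioi_deriv_of_nonneg hcont hG hf hGtop, ?_⟩
  simpa [G] using integral_Ioi_of_hasDerivAt_of_nonneg hcont hG hf hGtop

theorem integrableOn_Ioi_and_integral_Ioi_mul_exp_neg_eq_one {S s : ℝ → ℝ} {a : ℝ}
    (hS : ∀ x ∈ Ioi a, HasDerivAt S (-s x) x) (hs : ∀ x ∈ Ioi a, 0 ≤ s x)
    (ha : Tendsto S (𝓝[>] a) atTop) (htop : Tendsto S atTop (𝓝 0)) :
    IntegrableOn (fun x => s x * exp (-S x)) (Ioi a) ∧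
      ∫ x in Ioi a, s x * exp (-S x) = 1 := by
  have hderiv : ∀ x ∈ Ioi a, HasDerivAt (fun x => exp (-S x)) (s x * exp (-S x)) x :=
    fun x hx => by simpa [mul_comm] using (hS x hx).neg.exp
  have hnonneg : ∀ x ∈ Ioi a, 0 ≤ s x * exp (-S x) :=
    fun x hx => mul_nonneg (hs x hx) (exp_nonneg _)
  have h0 : Tendsto (fun x => exp (-S x)) (𝓝[>] a) (𝓝 0) :=
    tendsto_exp_atBot.comp (tendsto_neg_atTop_atBot.comp ha)
  have h1 : Tendsto (fun x => exp (-S x)) atTop (𝓝 1) :=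
    tendsto_exp_nhds_zero_nhds_one.comp (by simpa using htop.neg)
  simpa using
    integrableOn_Ioi_and_integral_Ioi_of_hasDerivAt_of_nonneg_of_tendsto hderiv hnonneg h0 h1

theorem integrableOn_exp_neg_sub_mul_min {c : ℝ} (hc : 0 ≤ c) :
    IntegrableOn (fun u => exp (-u - c * min 1 u)) (Ioi 0) := by
  refine (integrableOn_exp_neg_Ioi 0).mono' (by fun_prop) ?_
  filter_upwards [ae_restrict_mem measurableSet_Ioi] with u (hu : 0 < u)
  rw [norm_of_nonneg (exp_nonneg _), exp_le_exp]
  linarith [mul_nonneg hc (le_min zero_le_one hu.le)]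

theorem integral_exp_neg_sub_mul_min {c : ℝ} (hc : 0 ≤ c) :
    ∫ u in Ioi 0, exp (-u - c * min 1 u) = (1 + c * exp (-(1 + c))) / (1 + c) := by
  have hint := integrableOn_exp_neg_sub_mul_min hc
  rw [← Ioc_union_Ioi_eq_Ioi zero_le_one, setIntegral_union Ioc_disjoint_Ioi_same
    measurableSet_Ioi (hint.mono_set Ioc_subset_Ioi_self)
    (hint.mono_set (Ioi_subset_Ioi zero_le_one))]
  have hIoc : ∫ u in Ioc 0 1, exp (-u - c * min 1 u) = (1 - exp (-(1 + c))) / (1 + c) := by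
    rw [setIntegral_congr_fun measurableSet_Ioc (g := fun u => exp (-(1 + c) * u))
        (fun u hu => by simp only [min_eq_right hu.2]; ring_nf),
      ← intervalIntegral.integral_of_le zero_le_one,
      intervalIntegral.integral_comp_mul_left (fun u => exp u) (by linarith), integral_exp,
      mul_zero, mul_one, exp_zero, smul_eq_mul]
    field_simp
    ring
  have hIoi : ∫ u in Ioi 1, exp (-u - c * min 1 u) = exp (-(1 + c)) := by
    rw [setIntegral_congr_fun measurableSet_Ioi (g := fun u => exp (-c) * exp (-u))
        (fun u (hu : 1 < u) => by simp only [min_eq_left hu.le, ← exp_add]; ring_nf),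
      integral_const_mul, integral_exp_neg_Ioi, ← exp_add]
    ring_nf
  rw [hIoc, hIoi]
  field_simp
  ring

theorem div_two_add_le_one_sub_integral_exp_neg_sub_mul_min {c : ℝ} (hc : 0 ≤ c) :
    c / (2 + c) ≤ 1 - ∫ u in Ioi 0, exp (-u - c * min 1 u) := by
  have h : exp (-(1 + c)) * (2 + c) ≤ 1 := by
    calc exp (-(1 + c)) * (2 + c) ≤ exp (-(1 + c)) * exp (1 + c) := by
          gcongr; linarith [add_one_le_exp (1 + c)]
      _ = 1 := by rw [← exp_add, neg_add_cancel, exp_zero]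
  rw [integral_exp_neg_sub_mul_min hc,
    show 1 - (1 + c * exp (-(1 + c))) / (1 + c) = c * (1 - exp (-(1 + c))) / (1 + c) by
      field_simp; ring,
    div_le_div_iff₀ (by positivity) (by positivity)]
  nlinarith

theorem integrableOn_and_integral_rpow_mul_exp_neg_rpow_add_le {α c : ℝ} {T : ℝ → ℝ}
    (hα : 0 < α) (hc : 0 ≤ c) (hTcont : ContinuousOn T (Ioi 0))
    (hT : ∀ z ∈ Ioi 0, c * min 1 (z ^ (-α)) ≤ T z) :
    IntegrableOn (fun z => α * z ^ (-α - 1) * exp (-(z ^ (-α) + T z))) (Ioi 0) ∧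
      ∫ z in Ioi 0, α * z ^ (-α - 1) * exp (-(z ^ (-α) + T z)) ≤
        ∫ u in Ioi 0, exp (-u - c * min 1 u) := by
  set φ : ℝ → ℝ := fun u => exp (-u - c * min 1 u)
  have hsubst (z : ℝ) :
      (|-α| * z ^ (-α - 1)) • φ (z ^ (-α)) = α * z ^ (-α - 1) * φ (z ^ (-α)) := by
    rw [abs_neg, abs_of_pos hα, smul_eq_mul]
  have hmaj : IntegrableOn (fun z => α * z ^ (-α - 1) * φ (z ^ (-α))) (Ioi 0) := by
    simpa only [hsubst] using (integrableOn_Ioi_comp_rpow_iff φ (neg_ne_zero.mpr hα.ne')).mpr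
      (integrableOn_exp_neg_sub_mul_min hc)
  have hmeas : AEStronglyMeasurable (fun z => α * z ^ (-α - 1) * exp (-(z ^ (-α) + T z)))
      (volume.restrict (Ioi 0)) := by
    have hpow (p : ℝ) : ContinuousOn (fun z : ℝ => z ^ p) (Ioi 0) :=
      continuousOn_id.rpow_const fun z hz => Or.inl (ne_of_gt hz)
    exact ((continuousOn_const.mul (hpow _)).mul
      (continuous_exp.comp_continuousOn ((hpow _).add hTcont).neg)).aestronglyMeasurable
      measurableSet_Ioi
  have hle : ∀ z ∈ Ioi (0 : ℝ), α * z ^ (-α - 1) * exp (-(z ^ (-α) + T z)) ≤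
      α * z ^ (-α - 1) * φ (z ^ (-α)) := by
    intro z (hz : 0 < z)
    simp only [φ]
    gcongr
    linarith [hT z hz]
  have hint : IntegrableOn (fun z => α * z ^ (-α - 1) * exp (-(z ^ (-α) + T z))) (Ioi 0) := by
    refine hmaj.mono' hmeas ?_
    filter_upwards [ae_restrict_mem measurableSet_Ioi] with z (hz : 0 < z)
    rw [norm_of_nonneg (by have := rpow_nonneg hz.le (-α - 1); positivity)]
    exact hle z hz
  refine ⟨hint, ?_⟩
  calc ∫ z in Ioi 0, α * z ^ (-α - 1) * exp (-(z ^ (-α) + T z))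
      ≤ ∫ z in Ioi 0, α * z ^ (-α - 1) * φ (z ^ (-α)) :=
        setIntegral_mono_on hint hmaj measurableSet_Ioi hle
    _ = ∫ u in Ioi 0, φ u := by
        simpa only [hsubst] using integral_comp_rpow_Ioi φ (neg_ne_zero.mpr hα.ne')

theorem integrableOn_and_le_integral_mul_exp_neg_rpow_add {α c : ℝ} {T t : ℝ → ℝ} (hα : 0 < α)
    (hc : 0 ≤ c) (hT : ∀ z ∈ Ioi 0, HasDerivAt T (-t z) z) (ht : ∀ z ∈ Ioi 0, 0 ≤ t z)
    (hTtop : Tendsto T atTop (𝓝 0)) (hTc : ∀ z ∈ Ioi 0, c * min 1 (z ^ (-α)) ≤ T z) :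
    IntegrableOn (fun z => t z * exp (-(z ^ (-α) + T z))) (Ioi 0) ∧
      c / (2 + c) ≤ ∫ z in Ioi 0, t z * exp (-(z ^ (-α) + T z)) := by
  have hS : ∀ z ∈ Ioi (0 : ℝ), HasDerivAt (fun z => z ^ (-α) + T z)
      (-(α * z ^ (-α - 1) + t z)) z := fun z (hz : 0 < z) => by
    refine ((hasDerivAt_rpow_const (Or.inl hz.ne')).add (hT z hz)).congr_deriv ?_
    ring
  have hs : ∀ z ∈ Ioi (0 : ℝ), 0 ≤ α * z ^ (-α - 1) + t z := fun z (hz : 0 < z) =>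
    add_nonneg (mul_nonneg hα.le (rpow_nonneg hz.le _)) (ht z hz)
  have hS0 : Tendsto (fun z => z ^ (-α) + T z) (𝓝[>] 0) atTop :=
    tendsto_atTop_add_right_of_le' _ 0 (tendsto_rpow_neg_nhdsGT_zero (neg_neg_of_pos hα)) <| by
      filter_upwards [self_mem_nhdsWithin] with z (hz : 0 < z)
      exact (mul_nonneg hc (le_min zero_le_one (rpow_nonneg hz.le _))).trans (hTc z hz)
  have hStop : Tendsto (fun z => z ^ (-α) + T z) atTop (𝓝 0) := by
    simpa using (tendsto_rpow_neg_atTop hα).add hTtop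
  obtain ⟨hDint, hD⟩ := integrableOn_Ioi_and_integral_Ioi_mul_exp_neg_eq_one hS hs hS0 hStop
  obtain ⟨hEint, hE⟩ := integrableOn_and_integral_rpow_mul_exp_neg_rpow_add_le hα hc
    (fun z hz => (hT z hz).continuousAt.continuousWithinAt) hTc
  have hsub : (fun z => t z * exp (-(z ^ (-α) + T z))) =
      fun z => (α * z ^ (-α - 1) + t z) * exp (-(z ^ (-α) + T z)) -
        α * z ^ (-α - 1) * exp (-(z ^ (-α) + T z)) := by
    ext z; ring
  rw [hsub, integral_sub hDint hEint, hD]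
  exact ⟨hDint.sub hEint,
    (div_two_add_le_one_sub_integral_exp_neg_sub_mul_min hc).trans (by linarith)⟩

theorem Finset.one_le_sum_min_one {ι R : Type*} [Semiring R] [LinearOrder R] [IsOrderedRing R]
    {s : Finset ι} {x : ι → R} (hx : ∀ i ∈ s, 0 ≤ x i) (h : 1 ≤ ∑ i ∈ s, x i) :
    1 ≤ ∑ i ∈ s, min 1 (x i) := by
  by_cases hbig : ∃ i ∈ s, 1 ≤ x i
  · obtain ⟨i, hi, hxi⟩ := hbig
    calc (1 : R) = min 1 (x i) := (min_eq_left hxi).symm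
      _ ≤ ∑ i ∈ s, min 1 (x i) :=
        Finset.single_le_sum (fun j hj => le_min zero_le_one (hx j hj)) hi
  · push Not at hbig
    rwa [Finset.sum_congr rfl fun i hi => min_eq_right (hbig i hi).le]

theorem min_one_mul_min_one_le_min {R : Type*} [Semiring R] [LinearOrder R] [IsOrderedRing R]
    {a b : R} (ha : 0 ≤ a) (hb : 0 ≤ b) : min 1 a * min 1 b ≤ min a b :=
  le_min
    ((mul_le_of_le_one_right (le_min zero_le_one ha) (min_le_left _ _)).trans (min_le_right _ _))
    ((mul_le_of_le_one_left (le_min zero_le_one hb) (min_le_left _ _)).trans (min_le_right _ _))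

theorem two_rpow_neg_mul_min_le_add_rpow_neg {α x y : ℝ} (hα : 0 ≤ α) (hx : 0 < x)
    (hy : 0 < y) : 2 ^ (-α) * min (x ^ (-α)) (y ^ (-α)) ≤ (x + y) ^ (-α) := by
  have hmax : min (x ^ (-α)) (y ^ (-α)) ≤ max x y ^ (-α) := by
    rcases max_choice x y with h | h <;> rw [h]
    exacts [min_le_left _ _, min_le_right _ _]
  calc 2 ^ (-α) * min (x ^ (-α)) (y ^ (-α)) ≤ 2 ^ (-α) * max x y ^ (-α) := by gcongr
    _ = (2 * max x y) ^ (-α) := (mul_rpow zero_le_two (le_max_of_le_left hx.le)).symm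
    _ ≤ (x + y) ^ (-α) := rpow_le_rpow_of_nonpos (by positivity)
        (by linarith [le_max_left x y, le_max_right x y]) (neg_nonpos.mpr hα)

theorem two_rpow_neg_mul_min_one_le_sum_add_rpow_neg {ι : Type*} {s : Finset ι} {α z : ℝ}
    {μ : ι → ℝ} (hα : 0 ≤ α) (hz : 0 < z) (hμ : ∀ i ∈ s, 0 < μ i)
    (hsum : 1 ≤ ∑ i ∈ s, μ i ^ (-α)) :
    2 ^ (-α) * min 1 (z ^ (-α)) ≤ ∑ i ∈ s, (z + μ i) ^ (-α) := by
  have hz' : 0 ≤ z ^ (-α) := rpow_nonneg hz.le _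
  calc 2 ^ (-α) * min 1 (z ^ (-α))
      ≤ 2 ^ (-α) * min 1 (z ^ (-α)) * ∑ i ∈ s, min 1 (μ i ^ (-α)) :=
        le_mul_of_one_le_right (by positivity)
          (Finset.one_le_sum_min_one (fun i hi => rpow_nonneg (hμ i hi).le _) hsum)
    _ = ∑ i ∈ s, 2 ^ (-α) * (min 1 (z ^ (-α)) * min 1 (μ i ^ (-α))) := by
        rw [Finset.mul_sum]; simp only [mul_assoc]
    _ ≤ ∑ i ∈ s, (z + μ i) ^ (-α) := Finset.sum_le_sum fun i hi =>
        (mul_le_mul_of_nonneg_left (min_one_mul_min_one_le_min hz' (rpow_nonneg (hμ i hi).le _))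
          (by positivity)).trans (two_rpow_neg_mul_min_le_add_rpow_neg hα hz (hμ i hi))

theorem hasDerivAt_sum_add_rpow_neg {ι : Type*} {s : Finset ι} {α z : ℝ} {μ : ι → ℝ}
    (hμ : ∀ i ∈ s, 0 < z + μ i) :
    HasDerivAt (fun z => ∑ i ∈ s, (z + μ i) ^ (-α))
      (-∑ i ∈ s, α * (z + μ i) ^ (-α - 1)) z := by
  rw [← Finset.sum_neg_distrib]
  refine HasDerivAt.fun_sum fun i hi => ?_
  refine (((hasDerivAt_id z).add_const (μ i)).rpow_const (Or.inl (hμ i hi).ne')).congr_deriv ?_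
  simp

theorem integrableOn_and_le_integral_sum_rpow_mul_exp_neg {ι : Type*} {s : Finset ι} {α : ℝ}
    {μ : ι → ℝ} (hα : 0 < α) (hμ : ∀ i ∈ s, 0 < μ i) (hsum : 1 ≤ ∑ i ∈ s, μ i ^ (-α)) :
    IntegrableOn (fun z => (∑ i ∈ s, α * (z + μ i) ^ (-α - 1)) *
        exp (-(z ^ (-α) + ∑ i ∈ s, (z + μ i) ^ (-α)))) (Ioi 0) ∧
      1 / (2 ^ (α + 1) + 1) ≤ ∫ z in Ioi 0, (∑ i ∈ s, α * (z + μ i) ^ (-α - 1)) *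
        exp (-(z ^ (-α) + ∑ i ∈ s, (z + μ i) ^ (-α))) := by
  have hzμ : ∀ z ∈ Ioi (0 : ℝ), ∀ i ∈ s, 0 < z + μ i :=
    fun z (hz : 0 < z) i hi => add_pos hz (hμ i hi)
  have hc : (1 : ℝ) / (2 ^ (α + 1) + 1) = 2 ^ (-α) / (2 + 2 ^ (-α)) := by
    rw [rpow_add two_pos, rpow_one, rpow_neg zero_le_two]
    field_simp
  rw [hc]
  exact integrableOn_and_le_integral_mul_exp_neg_rpow_add hα (rpow_nonneg zero_le_two _)
    (fun z hz => hasDerivAt_sum_add_rpow_neg (hzμ z hz))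
    (fun z hz => Finset.sum_nonneg fun i hi => mul_nonneg hα.le (rpow_nonneg (hzμ z hz i hi).le _))
    (by simpa using tendsto_finsetSum _ fun i _ =>
      (tendsto_rpow_neg_atTop hα).comp (tendsto_atTop_add_const_right _ (μ i) tendsto_id))
    (fun z hz => two_rpow_neg_mul_min_one_le_sum_add_rpow_neg hα.le hz hμ hsum)

theorem integrableOn_sum_mul_add_rpow_mul_exp_neg {ι : Type*} {s : Finset ι} {α : ℝ}
    {μ : ι → ℝ} (hα : 0 < α) (hμ : ∀ i ∈ s, 0 < μ i) (w : ι → ℝ) :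
    IntegrableOn (fun z => (∑ i ∈ s, w i * (z + μ i) ^ (-α - 1)) *
      exp (-(z ^ (-α) + ∑ i ∈ s, (z + μ i) ^ (-α)))) (Ioi 0) := by
  refine Integrable.mul_bdd (c := 1) ?_ (by fun_prop) ?_
  · exact integrable_finsetSum _ fun i hi => (integrableOn_add_rpow_Ioi_of_lt (by linarith)
      (by linarith [hμ i hi])).const_mul (w i)
  · filter_upwards [ae_restrict_mem measurableSet_Ioi] with z (hz : 0 < z)
    rw [norm_of_nonneg (exp_nonneg _), exp_le_one_iff, neg_nonpos]
    exact add_nonneg (rpow_nonneg hz.le _)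
      (Finset.sum_nonneg fun i hi => rpow_nonneg (add_pos hz (hμ i hi)).le _)

/-- Regret lower bound term (case on event `F_tᶜ`): for `α > 1`, `K ≥ 2`,
`μ₁ = 0`, `μ_i > 0` for `2 ≤ i ≤ K`, `Σ_{i=2}^K μ_i^(-α) ≥ 1`, nonnegative
`Δ_i` with minimum `Δm`,
`α ∫₀^∞ (Σ_{i=2}^K Δ_i (z+μ_i)^(-(α+1))) exp(-Σ_{j=1}^K (z+μ_j)^(-α)) dz
  ≥ Δm / (2^(α+1) + 1)`. -/
theorem stmt_15 (α : ℝ) (hα : 1 < α) (K : ℕ) (hK : 2 ≤ K)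
    (μ : ℕ → ℝ) (hμ1 : μ 1 = 0) (hμpos : ∀ i ∈ Finset.Icc 2 K, 0 < μ i)
    (hμsum : 1 ≤ ∑ i ∈ Finset.Icc 2 K, (μ i) ^ (-α))
    (Δ : ℕ → ℝ) (hΔ : ∀ i ∈ Finset.Icc 2 K, 0 ≤ Δ i)
    (Δm : ℝ) (hΔm_le : ∀ i ∈ Finset.Icc 2 K, Δm ≤ Δ i)
    (hΔm_mem : ∃ i ∈ Finset.Icc 2 K, Δ i = Δm) :
    Δm / ((2 : ℝ) ^ (α + 1) + 1) ≤
      α * ∫ z in Set.Ioi (0:ℝ),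
        (∑ i ∈ Finset.Icc 2 K, Δ i * (z + μ i) ^ (-(α + 1))) *
          Real.exp (-(∑ j ∈ Finset.Icc 1 K, (z + μ j) ^ (-α))) := by
  have hα0 : 0 < α := by linarith
  have hΔm : 0 ≤ Δm := by obtain ⟨i, hi, rfl⟩ := hΔm_mem; exact hΔ i hi
  have hsplit (z : ℝ) : ∑ j ∈ Finset.Icc 1 K, (z + μ j) ^ (-α) =
      z ^ (-α) + ∑ i ∈ Finset.Icc 2 K, (z + μ i) ^ (-α) := by
    rw [← Finset.insert_Icc_add_one_left_eq_Icc (by omega : 1 ≤ K), Finset.sum_insert (by simp),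
      hμ1, add_zero]
    rfl
  obtain ⟨htint, htbound⟩ := integrableOn_and_le_integral_sum_rpow_mul_exp_neg hα0 hμpos hμsum
  simp_rw [hsplit, show -(α + 1) = -α - 1 by ring]
  rw [div_eq_mul_one_div]
  refine (mul_le_mul_of_nonneg_left htbound hΔm).trans ?_
  rw [← integral_const_mul, ← integral_const_mul]
  refine setIntegral_mono_on (htint.const_mul _)
    ((integrableOn_sum_mul_add_rpow_mul_exp_neg hα0 hμpos Δ).const_mul α) measurableSet_Ioi
    fun z (hz : 0 < z) => ?_
  rw [← mul_assoc, ← mul_assoc, Finset.mul_sum, Finset.mul_sum]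
  refine mul_le_mul_of_nonneg_right (Finset.sum_le_sum fun i hi => ?_) (exp_nonneg _)
  have := mul_le_mul_of_nonneg_left (hΔm_le i hi)
    (mul_nonneg hα0.le (rpow_nonneg (add_pos hz (hμpos i hi)).le (-α - 1)))
  linarith
end

section
/- For every real n > 0 and every real x > 0, one has x · (1 + x²/n)^{−(n+1)/2} ≤ n · ∫ₓ^∞ (1 + t²/n)^{−(n+1)/2} dt. (Equivalently, the Student-t distribution with n degrees of freedom satisfies x f(x)/(1 − F(x)) ≤ n for all x > 0, where f and F are its density and distribution functions.) -/
open Real MeasureTheory Filter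

/-!
Write `u t = 1 + t²/n` and `p = -(n+1)/2`. Since `t²/n = u - 1`, the product rule gives
`(t uᵖ)' = (1 + 2p) uᵖ - 2p uᵖ⁻¹ = -n uᵖ + (n+1) uᵖ⁻¹`, and `t uᵖ = O(t⁻ⁿ) → 0` at infinity.
Integrating over `(x, ∞)` yields `x u(x)ᵖ = n ∫ uᵖ - (n+1) ∫ uᵖ⁻¹ ≤ n ∫ uᵖ`.
-/

section

variable {n : ℝ}

lemma one_add_sq_div_pos (hn : 0 < n) (t : ℝ) : 0 < 1 + t ^ 2 / n := by positivity

lemma hasDerivAt_mul_one_add_sq_div_rpow (hn : 0 < n) (p t : ℝ) :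
    HasDerivAt (fun s => s * (1 + s ^ 2 / n) ^ p)
      ((1 + 2 * p) * (1 + t ^ 2 / n) ^ p - 2 * p * (1 + t ^ 2 / n) ^ (p - 1)) t := by
  have hu := one_add_sq_div_pos hn t
  have hinner : HasDerivAt (fun s : ℝ => 1 + s ^ 2 / n) (2 * t / n) t := by
    simpa using ((hasDerivAt_pow 2 t).div_const n).const_add 1
  refine ((hasDerivAt_id' t).mul (hinner.rpow_const (p := p) (Or.inl hu.ne'))).congr_deriv ?_
  have hsplit : (1 + t ^ 2 / n) ^ p = (1 + t ^ 2 / n) * (1 + t ^ 2 / n) ^ (p - 1) := by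
    conv_lhs => rw [show p = 1 + (p - 1) by ring, rpow_add hu, rpow_one]
  rw [hsplit]
  field_simp
  ring

lemma one_add_sq_div_rpow_le (hn : 0 < n) {p t : ℝ} (hp : p ≤ 0) (ht : 0 < t) :
    (1 + t ^ 2 / n) ^ p ≤ n ^ (-p) * t ^ (2 * p) := by
  calc (1 + t ^ 2 / n) ^ p ≤ (t ^ 2 / n) ^ p :=
        rpow_le_rpow_of_nonpos (by positivity) (by linarith) hp
    _ = n ^ (-p) * t ^ (2 * p) := by
        rw [div_rpow (by positivity) hn.le, ← rpow_natCast t 2, ← rpow_mul ht.le, rpow_neg hn.le,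
          div_eq_inv_mul]
        push_cast
        ring_nf

lemma integrableOn_Ioi_one_add_sq_div_rpow (hn : 0 < n) {p x : ℝ} (hp : p < -1 / 2)
    (hx : 0 < x) : IntegrableOn (fun t => (1 + t ^ 2 / n) ^ p) (Set.Ioi x) := by
  have hmaj : IntegrableOn (fun t : ℝ => n ^ (-p) * t ^ (2 * p)) (Set.Ioi x) :=
    (integrableOn_Ioi_rpow_of_lt (by linarith) hx).const_mul _
  refine hmaj.mono' ?_ ?_
  · exact ((continuous_const.add ((continuous_pow 2).div_const n)).rpow_const
      fun t => Or.inl (one_add_sq_div_pos hn t).ne').aestronglyMeasurable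
  · filter_upwards [ae_restrict_mem measurableSet_Ioi] with t ht
    rw [norm_of_nonneg (rpow_nonneg (one_add_sq_div_pos hn t).le _)]
    exact one_add_sq_div_rpow_le hn (by linarith) (hx.trans ht)

lemma tendsto_mul_one_add_sq_div_rpow_atTop (hn : 0 < n) {p : ℝ} (hp : p < -1 / 2) :
    Tendsto (fun t => t * (1 + t ^ 2 / n) ^ p) atTop (nhds 0) := by
  have hdecay : Tendsto (fun t : ℝ => n ^ (-p) * t ^ (1 + 2 * p)) atTop (nhds 0) := by
    simpa using (tendsto_rpow_neg_atTop (y := -(1 + 2 * p)) (by linarith)).const_mul (n ^ (-p))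
  refine tendsto_of_tendsto_of_tendsto_of_le_of_le' tendsto_const_nhds hdecay ?_ ?_
  · filter_upwards [eventually_gt_atTop 0] with t ht
    exact mul_nonneg ht.le (rpow_nonneg (one_add_sq_div_pos hn t).le _)
  · filter_upwards [eventually_gt_atTop 0] with t ht
    calc t * (1 + t ^ 2 / n) ^ p ≤ t * (n ^ (-p) * t ^ (2 * p)) :=
          mul_le_mul_of_nonneg_left (one_add_sq_div_rpow_le hn (by linarith) ht) ht.le
      _ = n ^ (-p) * t ^ (1 + 2 * p) := by rw [rpow_add ht, rpow_one]; ring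

lemma mul_one_add_sq_div_rpow_eq_integral_Ioi (hn : 0 < n) {p x : ℝ} (hp : p < -1 / 2)
    (hx : 0 < x) :
    x * (1 + x ^ 2 / n) ^ p = -(1 + 2 * p) * (∫ t in Set.Ioi x, (1 + t ^ 2 / n) ^ p)
      + 2 * p * ∫ t in Set.Ioi x, (1 + t ^ 2 / n) ^ (p - 1) := by
  have hf := (integrableOn_Ioi_one_add_sq_div_rpow hn hp hx).const_mul (1 + 2 * p)
  have hg := (integrableOn_Ioi_one_add_sq_div_rpow hn (by linarith : p - 1 < -1 / 2) hx).const_mul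
    (2 * p)
  have hFTC : ∫ t in Set.Ioi x,
      ((1 + 2 * p) * (1 + t ^ 2 / n) ^ p - 2 * p * (1 + t ^ 2 / n) ^ (p - 1)) =
      0 - x * (1 + x ^ 2 / n) ^ p :=
    integral_Ioi_of_hasDerivAt_of_tendsto' (fun t _ => hasDerivAt_mul_one_add_sq_div_rpow hn p t)
      (hf.sub hg) (tendsto_mul_one_add_sq_div_rpow_atTop hn hp)
  rw [integral_sub hf hg, integral_const_mul, integral_const_mul] at hFTC
  linarith

end

/-- The Student-t distribution with `n` degrees of freedom satisfies
`x f(x)/(1 - F(x)) ≤ n` for `x > 0`; after cancelling the normalizing constant: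
`x (1 + x²/n)^(-(n+1)/2) ≤ n ∫ₓ^∞ (1 + t²/n)^(-(n+1)/2) dt`. -/
theorem stmt_16 (n x : ℝ) (hn : 0 < n) (hx : 0 < x) :
    x * (1 + x ^ 2 / n) ^ (-((n + 1) / 2)) ≤
      n * ∫ t in Set.Ioi x, (1 + t ^ 2 / n) ^ (-((n + 1) / 2)) := by
  have hp : -((n + 1) / 2) < -1 / 2 := by linarith
  have hrest : 0 ≤ ∫ t in Set.Ioi x, (1 + t ^ 2 / n) ^ (-((n + 1) / 2) - 1) :=
    setIntegral_nonneg measurableSet_Ioi fun t _ => rpow_nonneg (one_add_sq_div_pos hn t).le _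
  rw [mul_one_add_sq_div_rpow_eq_integral_Ioi hn hp hx]
  nlinarith
end

section
/- For all reals m > 0, n > 0, and x > 0, one has x^{m/2} · (1 + (m/n) x)^{−(m+n)/2} ≤ (n/2) · ∫ₓ^∞ t^{m/2 − 1} (1 + (m/n) t)^{−(m+n)/2} dt. (Equivalently, Snedecor's F distribution with parameters m, n satisfies x f(x)/(1 − F(x)) ≤ n/2 for all x > 0, where f and F are its density and distribution functions.) -/
/-!
Put `g t = t ^ a * (1 + c t) ^ (-(a + b))`. A direct computation gives
`g' t = (a + b) t ^ (a - 1) (1 + c t) ^ (-(a + b + 1)) - b t ^ (a - 1) (1 + c t) ^ (-(a + b))`,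
and `g` vanishes at infinity because `g t = t ^ (-b) (t⁻¹ + c) ^ (-(a + b))`. Integrating `g'`
over `(x, ∞)` therefore expresses `g x` as `b ∫ₓ^∞ t ^ (a - 1) (1 + c t) ^ (-(a + b))` minus a
nonnegative integral. The F distribution is the case `a = m / 2`, `b = n / 2`, `c = m / n`.
-/

open Real MeasureTheory
open Set Filter Topology Asymptotics

lemma rpow_mul_one_add_mul_rpow_neg_eq_rpow_sub_mul {t c : ℝ} (ht : 0 < t) (hc : 0 ≤ c)
    (α β : ℝ) :
    t ^ α * (1 + c * t) ^ (-β) = t ^ (α - β) * (t⁻¹ + c) ^ (-β) := by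
  rw [show 1 + c * t = t * (t⁻¹ + c) by field_simp, mul_rpow ht.le (by positivity), ← mul_assoc,
    ← rpow_add ht, sub_eq_add_neg]

lemma tendsto_inv_add_rpow_atTop {c : ℝ} (hc : 0 < c) (β : ℝ) :
    Tendsto (fun t : ℝ => (t⁻¹ + c) ^ (-β)) atTop (𝓝 (c ^ (-β))) := by
  have h : Tendsto (fun t : ℝ => t⁻¹ + c) atTop (𝓝 c) := by
    simpa using tendsto_inv_atTop_zero.add_const c
  exact (continuousAt_rpow_const c (-β) (Or.inl hc.ne')).tendsto.comp h

lemma tendsto_rpow_mul_one_add_mul_rpow_neg_atTop {α β c : ℝ} (hαβ : α < β) (hc : 0 < c) :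
    Tendsto (fun t : ℝ => t ^ α * (1 + c * t) ^ (-β)) atTop (𝓝 0) := by
  have h := (tendsto_rpow_neg_atTop (sub_pos.2 hαβ)).mul (tendsto_inv_add_rpow_atTop hc β)
  rw [zero_mul] at h
  refine h.congr' ?_
  filter_upwards [eventually_gt_atTop 0] with t ht
  rw [rpow_mul_one_add_mul_rpow_neg_eq_rpow_sub_mul ht hc.le, neg_sub]

lemma integrableOn_Ioi_rpow_mul_one_add_mul_rpow_neg {α β c x : ℝ} (hαβ : α - β < -1)
    (hc : 0 < c) (hx : 0 < x) :
    IntegrableOn (fun t : ℝ => t ^ α * (1 + c * t) ^ (-β)) (Ioi x) := by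
  refine (LocallyIntegrableOn.integrableOn_of_isBigO_atTop (g := fun t : ℝ => t ^ (α - β))
    ?_ ?_ ⟨Ioi 1, Ioi_mem_atTop 1, integrableOn_Ioi_rpow_of_lt hαβ one_pos⟩).mono_set
    Ioi_subset_Ici_self
  · refine ContinuousOn.locallyIntegrableOn (fun t ht => ?_) measurableSet_Ici
    have ht : 0 < t := hx.trans_le ht
    have hu : 1 + c * t ≠ 0 := by positivity
    exact ((continuousAt_rpow_const t α (Or.inl ht.ne')).mul
      ((continuousAt_const.add (continuousAt_const.mul continuousAt_id)).rpow_const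
        (Or.inl hu))).continuousWithinAt
  · have h := (isBigO_refl (fun t : ℝ => t ^ (α - β)) atTop).mul
      ((tendsto_inv_add_rpow_atTop hc β).isBigO_one ℝ)
    simp only [mul_one] at h
    refine h.congr' ?_ EventuallyEq.rfl
    filter_upwards [eventually_gt_atTop 0] with t ht
    rw [rpow_mul_one_add_mul_rpow_neg_eq_rpow_sub_mul ht hc.le]

lemma hasDerivAt_rpow_mul_one_add_mul_rpow_neg {t c : ℝ} (ht : 0 < t) (hc : 0 ≤ c) (a b : ℝ) :
    HasDerivAt (fun s : ℝ => s ^ a * (1 + c * s) ^ (-(a + b)))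
      ((a + b) * (t ^ (a - 1) * (1 + c * t) ^ (-(a + b + 1)))
        - b * (t ^ (a - 1) * (1 + c * t) ^ (-(a + b)))) t := by
  have hu : 0 < 1 + c * t := by positivity
  have h1 : HasDerivAt (fun s : ℝ => s ^ a) (a * t ^ (a - 1)) t :=
    hasDerivAt_rpow_const (Or.inl ht.ne')
  have h2 : HasDerivAt (fun s : ℝ => (1 + c * s) ^ (-(a + b)))
      (c * -(a + b) * (1 + c * t) ^ (-(a + b) - 1)) t :=
    (((hasDerivAt_id t).const_mul c).const_add 1).rpow_const (Or.inl hu.ne') |>.congr_deriv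
      (by simp)
  have e1 : t ^ a = t * t ^ (a - 1) := by
    conv_lhs => rw [show a = 1 + (a - 1) by ring, rpow_add ht, rpow_one]
  have e2 : (1 + c * t) ^ (-(a + b)) = (1 + c * t) * (1 + c * t) ^ (-(a + b + 1)) := by
    conv_lhs => rw [show -(a + b) = 1 + -(a + b + 1) by ring, rpow_add hu, rpow_one]
  refine (h1.mul h2).congr_deriv ?_
  rw [show -(a + b) - 1 = -(a + b + 1) by ring, e1, e2]
  ring

theorem rpow_mul_one_add_mul_rpow_neg_le_mul_integral_Ioi {a b c x : ℝ} (hab : 0 ≤ a + b)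
    (hb : 0 < b) (hc : 0 < c) (hx : 0 < x) :
    x ^ a * (1 + c * x) ^ (-(a + b)) ≤
      b * ∫ t in Ioi x, t ^ (a - 1) * (1 + c * t) ^ (-(a + b)) := by
  have hf : IntegrableOn (fun t : ℝ => t ^ (a - 1) * (1 + c * t) ^ (-(a + b))) (Ioi x) :=
    integrableOn_Ioi_rpow_mul_one_add_mul_rpow_neg (by linarith) hc hx
  have hh : IntegrableOn (fun t : ℝ => t ^ (a - 1) * (1 + c * t) ^ (-(a + b + 1))) (Ioi x) :=
    integrableOn_Ioi_rpow_mul_one_add_mul_rpow_neg (by linarith) hc hx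
  have hFTC := integral_Ioi_of_hasDerivAt_of_tendsto'
    (fun t ht => hasDerivAt_rpow_mul_one_add_mul_rpow_neg (hx.trans_le ht) hc.le a b)
    ((hh.const_mul (a + b)).sub (hf.const_mul b))
    (tendsto_rpow_mul_one_add_mul_rpow_neg_atTop (by linarith) hc)
  rw [integral_sub (hh.const_mul _) (hf.const_mul _), integral_const_mul,
    integral_const_mul] at hFTC
  have hh_nonneg : 0 ≤ ∫ t in Ioi x, t ^ (a - 1) * (1 + c * t) ^ (-(a + b + 1)) :=
    setIntegral_nonneg measurableSet_Ioi fun t ht => by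
      have ht : 0 < t := hx.trans ht
      positivity
  linarith [mul_nonneg hab hh_nonneg]

/-- Snedecor's F distribution with parameters `m, n` satisfies
`x f(x)/(1 - F(x)) ≤ n/2` for `x > 0`; after cancelling the normalizing constant:
`x^(m/2) (1 + (m/n) x)^(-(m+n)/2) ≤ (n/2) ∫ₓ^∞ t^(m/2-1) (1 + (m/n) t)^(-(m+n)/2) dt`. -/
theorem stmt_17 (m n x : ℝ) (hm : 0 < m) (hn : 0 < n) (hx : 0 < x) :
    x ^ (m / 2) * (1 + m / n * x) ^ (-((m + n) / 2)) ≤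
      n / 2 * ∫ t in Set.Ioi x, t ^ (m / 2 - 1) * (1 + m / n * t) ^ (-((m + n) / 2)) := by
  rw [add_div]
  exact rpow_mul_one_add_mul_rpow_neg_le_mul_integral_Ioi (by positivity) (by positivity)
    (by positivity) hx
end

section
/- Fix reals m > 0 and n > 0, let f(t) = t^{m/2 − 1} (1 + (m/n) t)^{−(m+n)/2} for t > 0, and let F(x) = ∫₀ˣ f(t) dt. Then the ratio f(x)/F(x) is monotonically nonincreasing on (0, ∞); that is, for all 0 < y ≤ x one has f(x) F(y) ≤ f(y) F(x). -/
/-!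
Substituting `t = λ s` with `λ = y / x` writes `F y = λ ∫₀ˣ f (λ s) ds`, so it suffices to compare
integrands: `f x · λ f (λ s) ≤ f y · f s` for `0 ≤ s ≤ x`. The power factors agree on both sides, and
for the remaining factor `(1 + c t)^(-b)` the inequality reduces to `λ ≤ 1` together with
`(1 + c λ x)(1 + c s) ≤ (1 + c x)(1 + c λ s)`, whose difference is `c (1 - λ)(x - s) ≥ 0`.
-/

open Real MeasureTheory Set

theorem mul_integral_le_of_scaling {f : ℝ → ℝ} {l x : ℝ} (hl0 : 0 < l) (hl1 : l ≤ 1)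
    (hx : 0 ≤ x) (hf : IntervalIntegrable f volume 0 x)
    (h : ∀ s ∈ Icc 0 x, f x * (l * f (l * s)) ≤ f (l * x) * f s) :
    f x * ∫ t in (0 : ℝ)..l * x, f t ≤ f (l * x) * ∫ t in (0 : ℝ)..x, f t := by
  have hlx : l * x ∈ uIcc 0 x := by
    rw [uIcc_of_le hx]
    exact ⟨by positivity, mul_le_of_le_one_left hx hl1⟩
  have hscaled : IntervalIntegrable (fun s => f (l * s)) volume 0 x := by
    have h := (hf.mono_set (uIcc_subset_uIcc left_mem_uIcc hlx)).comp_mul_left (c := l)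
    rwa [zero_div, mul_div_cancel_left₀ x hl0.ne'] at h
  have hsubst : ∫ t in (0 : ℝ)..l * x, f t = l * ∫ s in (0 : ℝ)..x, f (l * s) := by
    rw [intervalIntegral.integral_comp_mul_left f hl0.ne', mul_zero, smul_eq_mul,
      mul_inv_cancel_left₀ hl0.ne']
  calc f x * ∫ t in (0 : ℝ)..l * x, f t
      = ∫ s in (0 : ℝ)..x, f x * (l * f (l * s)) := by
        rw [hsubst, intervalIntegral.integral_const_mul, intervalIntegral.integral_const_mul]
    _ ≤ ∫ s in (0 : ℝ)..x, f (l * x) * f s :=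
        intervalIntegral.integral_mono_on hx ((hscaled.const_mul l).const_mul (f x))
          (hf.const_mul _) h
    _ = f (l * x) * ∫ t in (0 : ℝ)..x, f t := intervalIntegral.integral_const_mul _ _

noncomputable def snedecorKernel (a b c t : ℝ) : ℝ := t ^ a * (1 + c * t) ^ (-b)

theorem intervalIntegrable_snedecorKernel {a b c T : ℝ} (ha : -1 < a) (hc : 0 ≤ c)
    (hT : 0 ≤ T) : IntervalIntegrable (snedecorKernel a b c) volume 0 T := by
  refine (intervalIntegral.intervalIntegrable_rpow' ha).mul_continuousOn ?_
  refine ContinuousOn.rpow_const (by fun_prop) fun t ht => Or.inl ?_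
  rw [uIcc_of_le hT] at ht
  have := ht.1
  positivity

theorem one_add_mul_mul_one_add_mul_le {c l s x : ℝ} (hc : 0 ≤ c) (hl1 : l ≤ 1) (hsx : s ≤ x) :
    (1 + c * (l * x)) * (1 + c * s) ≤ (1 + c * x) * (1 + c * (l * s)) := by
  nlinarith [mul_nonneg hc (mul_nonneg (sub_nonneg.2 hl1) (sub_nonneg.2 hsx))]

theorem snedecorKernel_scaling {a b c l s x : ℝ} (hb : 0 ≤ b) (hc : 0 ≤ c) (hl0 : 0 ≤ l)
    (hl1 : l ≤ 1) (hs : 0 ≤ s) (hsx : s ≤ x) :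
    snedecorKernel a b c x * (l * snedecorKernel a b c (l * s))
      ≤ snedecorKernel a b c (l * x) * snedecorKernel a b c s := by
  have hx : 0 ≤ x := hs.trans hsx
  have hx1 : 0 ≤ 1 + c * x := by positivity
  have hlx1 : 0 ≤ 1 + c * (l * x) := by positivity
  have hs1 : 0 ≤ 1 + c * s := by positivity
  have hls1 : 0 ≤ 1 + c * (l * s) := by positivity
  have hfactor : l * ((1 + c * x) * (1 + c * (l * s))) ^ (-b)
      ≤ ((1 + c * (l * x)) * (1 + c * s)) ^ (-b) :=
    calc l * ((1 + c * x) * (1 + c * (l * s))) ^ (-b)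
        ≤ ((1 + c * x) * (1 + c * (l * s))) ^ (-b) :=
          mul_le_of_le_one_left (by positivity) hl1
      _ ≤ ((1 + c * (l * x)) * (1 + c * s)) ^ (-b) :=
          rpow_le_rpow_of_nonpos (by positivity) (one_add_mul_mul_one_add_mul_le hc hl1 hsx)
            (neg_nonpos.2 hb)
  calc snedecorKernel a b c x * (l * snedecorKernel a b c (l * s))
      = (x ^ a * l ^ a * s ^ a) * (l * ((1 + c * x) * (1 + c * (l * s))) ^ (-b)) := by
        rw [snedecorKernel, snedecorKernel, mul_rpow hl0 hs, mul_rpow hx1 hls1]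
        ring
    _ ≤ (x ^ a * l ^ a * s ^ a) * ((1 + c * (l * x)) * (1 + c * s)) ^ (-b) :=
        mul_le_mul_of_nonneg_left hfactor (by positivity)
    _ = snedecorKernel a b c (l * x) * snedecorKernel a b c s := by
        rw [snedecorKernel, snedecorKernel, mul_rpow hl0 hx, mul_rpow hlx1 hs1]
        ring

/-- For the (unnormalized) Snedecor-F density
`f(t) = t^(m/2-1) (1 + (m/n) t)^(-(m+n)/2)` with `F(x) = ∫₀ˣ f(t) dt`, the ratio
`f/F` is monotonically nonincreasing on `(0, ∞)`: for `0 < y ≤ x`,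
`f(x) F(y) ≤ f(y) F(x)`. -/
theorem stmt_18 (m n : ℝ) (hm : 0 < m) (hn : 0 < n)
    (f : ℝ → ℝ) (hf : ∀ t, f t = t ^ (m / 2 - 1) * (1 + m / n * t) ^ (-((m + n) / 2)))
    (F : ℝ → ℝ) (hF : ∀ x, F x = ∫ t in (0:ℝ)..x, f t)
    (x y : ℝ) (hy : 0 < y) (hyx : y ≤ x) :
    f x * F y ≤ f y * F x := by
  obtain rfl : f = snedecorKernel (m / 2 - 1) ((m + n) / 2) (m / n) := funext hf
  have hx : 0 < x := hy.trans_le hyx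
  have hl1 : y / x ≤ 1 := (div_le_one hx).2 hyx
  have hc : 0 ≤ m / n := by positivity
  rw [hF, hF, ← div_mul_cancel₀ y hx.ne']
  refine mul_integral_le_of_scaling (by positivity) hl1 hx.le
    (intervalIntegrable_snedecorKernel (by linarith) hc hx.le) fun s hs => ?_
  exact snedecorKernel_scaling (by positivity) hc (by positivity) hl1 hs.1 hs.2
end
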